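/- arXiv:1911.04458 — 6 statements merged into one kernel-verified Lean document; each statement's English description precedes it below -/
import Mathlib

section
/- The distribution of the order statistics of k i.i.d. Uniform([0,1]) random variables is a stationary distribution for the k-point circular exclusion process: if X_(1) < X_(2) < ... < X_(k) are the order statistics of k i.i.d. uniforms on [0,1] and Y is an independent Uniform([0,1]) variable, then the configuration obtained by inserting Y and deleting X_(I), where I is the index with Y in the cyclic interval (X_(I-1), X_(I)) (with the convention that (X_(0), X_(1)) denotes (0,X_(1)) ∪ (X_(k),1) and in that case X_(1) is deleted), is again distributed as the order statistics of k i.i.d. uniforms on [0,1]. -/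
open MeasureTheory

/-- The uniform probability measure on `[0,1]`. -/
noncomputable def unifI : Measure ℝ := volume.restrict (Set.Icc (0:ℝ) 1)

/-- Sorting a tuple into nondecreasing order (the order statistics of the tuple). -/
noncomputable def sortTuple {k : ℕ} (x : Fin k → ℝ) : Fin k → ℝ := x ∘ (Tuple.sort x)

/-- The index of the point deleted when `y` is inserted into the sorted configuration `x`:
the smallest point strictly above `y` is deleted; if there is none (cyclic convention),
the smallest point `x 0` is deleted. -/
noncomputable def delIdx {k : ℕ} (hk : 0 < k) (x : Fin k → ℝ) (y : ℝ) : Fin k := by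
  classical
  exact if h : (Finset.univ.filter fun i => y < x i).Nonempty
    then (Finset.univ.filter fun i => y < x i).min' h
    else ⟨0, hk⟩

/-- One step of the `k`-point circular exclusion process: insert `y`, delete the nearest
counterclockwise point, and record the configuration in sorted order. -/
noncomputable def exclStep {k : ℕ} (hk : 0 < k) (x : Fin k → ℝ) (y : ℝ) : Fin k → ℝ :=
  sortTuple (Function.update x (delIdx hk x y) y)

/-!
Realise a step with `k + 1` i.i.d. points `c`: the configuration is `c` without `c 0` and the
inserted point is `c 0`. Almost surely the points are distinct; on the cell where `s = c ∘ τ` is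
strictly increasing, `c 0` has rank `r = τ⁻¹ 0`, the sorted configuration is `s` without entry `r`,
and the updated configuration is `s` without entry `r + 1` (cyclically). By exchangeability `s` has
the same law on every cell, so both laws are sums over the cells of that law with entry `τ⁻¹ 0`,
resp. `τ⁻¹ 0 + 1`, removed; `τ ↦ τ * (· + 1)⁻¹` permutes the cells and turns one sum into the other.
-/

open Function Set

section Sorting

variable {n : ℕ}

lemma sortTuple_comp_perm (x : Fin n → ℝ) (σ : Equiv.Perm (Fin n)) :
    sortTuple (x ∘ σ) = sortTuple x :=
  Tuple.comp_perm_comp_sort_eq_comp_sort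

lemma sortTuple_of_monotone {x : Fin n → ℝ} (h : Monotone x) : sortTuple x = x :=
  (Tuple.comp_sort_eq_comp_iff_monotone (σ := 1).mpr h).symm

lemma sortTuple_eq_comp_of_monotone {x : Fin n → ℝ} {σ : Equiv.Perm (Fin n)}
    (h : Monotone (x ∘ σ)) : sortTuple x = x ∘ σ := by
  rw [← sortTuple_comp_perm x σ, sortTuple_of_monotone h]

lemma exists_perm_eq_comp_of_range_eq {α β : Type*} {f g : α → β} (hf : Injective f)
    (hg : Injective g) (h : range f = range g) : ∃ σ : Equiv.Perm α, f = g ∘ σ :=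
  ⟨(Equiv.ofInjective f hf).trans ((Equiv.setCongr h).trans (Equiv.ofInjective g hg).symm),
    funext fun a => by simp [Equiv.apply_ofInjective_symm]⟩

lemma exists_perm_comp_succAbove_eq (π : Equiv.Perm (Fin (n + 1))) (r : Fin (n + 1)) :
    ∃ σ : Equiv.Perm (Fin n), π ∘ r.succAbove = (π r).succAbove ∘ σ := by
  refine exists_perm_eq_comp_of_range_eq (π.injective.comp Fin.succAbove_right_injective)
    Fin.succAbove_right_injective ?_
  rw [range_comp, Fin.range_succAbove, Fin.range_succAbove, Equiv.image_compl, image_singleton]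

lemma sortTuple_comp_perm_comp_succAbove (s : Fin (n + 1) → ℝ) (π : Equiv.Perm (Fin (n + 1)))
    (r : Fin (n + 1)) : sortTuple (s ∘ π ∘ r.succAbove) = sortTuple (s ∘ (π r).succAbove) := by
  obtain ⟨σ, hσ⟩ := exists_perm_comp_succAbove_eq π r
  rw [hσ, ← comp_assoc, sortTuple_comp_perm]

lemma eq_of_strictMono_comp {c : Fin n → ℝ} {σ τ : Equiv.Perm (Fin n)} (hσ : StrictMono (c ∘ σ))
    (hτ : StrictMono (c ∘ τ)) : σ = τ := by
  have hc : Injective c := by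
    simpa [comp_assoc] using hσ.injective.comp σ.symm.injective
  exact Equiv.ext fun i => hc (congrFun (Tuple.unique_monotone hσ.monotone hτ.monotone) i)

end Sorting

section Step

variable {k : ℕ} (hk : 0 < k)

lemma delIdx_eq_of_lt {x : Fin k → ℝ} {y : ℝ} {i : Fin k} (hi : y < x i)
    (hmin : ∀ j < i, x j ≤ y) : delIdx hk x y = i := by
  have hne : (Finset.univ.filter fun j => y < x j).Nonempty := ⟨i, by simpa using hi⟩
  rw [delIdx, dif_pos hne, Finset.min'_eq_iff]
  simp only [Finset.mem_filter, Finset.mem_univ, true_and]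
  exact ⟨hi, fun j hj => not_lt.mp fun hji => (hmin j hji).not_gt hj⟩

lemma delIdx_eq_zero {x : Fin k → ℝ} {y : ℝ} (h : ∀ j, x j ≤ y) : delIdx hk x y = ⟨0, hk⟩ := by
  have hne : ¬(Finset.univ.filter fun j => y < x j).Nonempty := by
    simpa [Finset.filter_eq_empty_iff] using h
  rw [delIdx, dif_neg hne]

lemma succAbove_delIdx {s : Fin (k + 1) → ℝ} (hs : StrictMono s) (r : Fin (k + 1)) :
    r.succAbove (delIdx hk (s ∘ r.succAbove) (s r)) = r + 1 := by
  rcases Fin.eq_castSucc_or_eq_last r with ⟨i, rfl⟩ | rfl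
  · have hdel : delIdx hk (s ∘ i.castSucc.succAbove) (s i.castSucc) = i := by
      refine delIdx_eq_of_lt hk ?_ fun j hj => ?_
      · simpa using hs Fin.castSucc_lt_succ
      · simpa [Fin.succAbove_of_castSucc_lt _ _ (Fin.castSucc_lt_castSucc_iff.mpr hj)]
          using hs.monotone (Fin.castSucc_le_castSucc_iff.mpr hj.le)
    rw [hdel, Fin.succAbove_castSucc_self, Fin.coeSucc_eq_succ]
  · have hdel : delIdx hk (s ∘ (Fin.last k).succAbove) (s (Fin.last k)) = ⟨0, hk⟩ :=
      delIdx_eq_zero hk fun j => by simpa using hs.monotone (Fin.le_last j.castSucc)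
    rw [hdel, Fin.succAbove_last, Fin.last_add_one]
    rfl

lemma update_succAbove_eq_swap_comp (r : Fin (k + 1)) (i : Fin k) :
    update r.succAbove i r = Equiv.swap r (r.succAbove i) ∘ r.succAbove := by
  funext j
  rcases eq_or_ne j i with rfl | hj
  · simp
  · rw [update_of_ne hj, comp_apply, Equiv.swap_apply_of_ne_of_ne (Fin.succAbove_ne r j)
      (Fin.succAbove_right_injective.ne hj)]

theorem exclStep_comp_succAbove {s : Fin (k + 1) → ℝ} (hs : StrictMono s) (r : Fin (k + 1)) :
    exclStep hk (s ∘ r.succAbove) (s r) = s ∘ (r + 1).succAbove := by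
  rw [exclStep, ← comp_update, update_succAbove_eq_swap_comp, succAbove_delIdx hk hs,
    sortTuple_comp_perm_comp_succAbove, Equiv.swap_apply_left,
    sortTuple_of_monotone (hs.comp (Fin.strictMono_succAbove _)).monotone]

end Step

section Measurability

lemma measurable_of_eqOn_cover {α β ι : Type*} [MeasurableSpace α] [MeasurableSpace β]
    [Countable ι] {f : α → β} {S : ι → Set α} (hS : ∀ i, MeasurableSet (S i))
    (hcover : ∀ a, ∃ i, a ∈ S i) {g : ι → α → β} (hg : ∀ i, Measurable (g i)) (hfg : ∀ i, EqOn f (g i) (S i)) :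
    Measurable f := by
  intro B hB
  have : f ⁻¹' B = ⋃ i, S i ∩ g i ⁻¹' B := by
    ext a
    simp only [mem_preimage, mem_iUnion, mem_inter_iff]
    refine ⟨fun ha => ?_, fun ⟨i, hai, hgi⟩ => hfg i hai ▸ hgi⟩
    obtain ⟨i, hai⟩ := hcover a
    exact ⟨i, hai, hfg i hai ▸ ha⟩
  rw [this]
  exact .iUnion fun i => (hS i).inter (hg i hB)

variable {n : ℕ}

lemma measurable_comp_right {ι ι' β : Type*} [MeasurableSpace β] (e : ι → ι') :
    Measurable fun c : ι' → β => c ∘ e :=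
  measurable_pi_lambda _ fun _ => measurable_pi_apply _

lemma measurableSet_monotone : MeasurableSet {c : Fin n → ℝ | Monotone c} := by
  simp only [Monotone, ofPred_forall]
  exact .iInter fun i => .iInter fun j => .iInter fun _ =>
    measurableSet_le (measurable_pi_apply i) (measurable_pi_apply j)

lemma measurableSet_strictMono : MeasurableSet {c : Fin n → ℝ | StrictMono c} := by
  simp only [StrictMono, ofPred_forall]
  exact .iInter fun i => .iInter fun j => .iInter fun _ =>
    measurableSet_lt (measurable_pi_apply i) (measurable_pi_apply j)

lemma measurable_sortTuple : Measurable (sortTuple : (Fin n → ℝ) → Fin n → ℝ) :=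
  measurable_of_eqOn_cover (S := fun σ : Equiv.Perm (Fin n) => {c | Monotone (c ∘ σ)})
    (fun σ => measurable_comp_right σ measurableSet_monotone)
    (fun c => ⟨Tuple.sort c, Tuple.monotone_sort c⟩) (fun σ => measurable_comp_right σ)
    fun _ _ hc => sortTuple_eq_comp_of_monotone hc

variable {k : ℕ} (hk : 0 < k)

variable {α : Type*} [MeasurableSpace α] {f : α → Fin k → ℝ} {g : α → ℝ}

theorem Measurable.delIdx (hf : Measurable f) (hg : Measurable g) :
    Measurable fun a => delIdx hk (f a) (g a) := by
  classical
  -- `delIdx` only sees the pattern of comparisons `y < x i`, which ranges over a finite set.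
  let D : (Fin k → Prop) → Fin k := fun P =>
    if h : (Finset.univ.filter P).Nonempty then (Finset.univ.filter P).min' h else ⟨0, hk⟩
  have hD : (fun a => _root_.delIdx hk (f a) (g a)) = D ∘ fun a i => g a < f a i := by
    funext a
    simp only [_root_.delIdx, D, comp_apply]
  rw [hD]
  exact (measurable_of_countable D).comp <| measurable_pi_lambda _ fun i =>
    measurableSet_setOfPred.mp <| measurableSet_lt hg ((measurable_pi_apply i).comp hf)

theorem Measurable.exclStep (hf : Measurable f) (hg : Measurable g) :
    Measurable fun a => exclStep hk (f a) (g a) := by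
  classical
  refine measurable_sortTuple.comp <| measurable_pi_lambda _ fun j => ?_
  simp only [update_apply]
  exact .ite (measurableSet_eq_fun measurable_const (hf.delIdx hk hg)) hg
    ((measurable_pi_apply j).comp hf)

end Measurability

section PiMeasure

variable {α : Type*} [MeasurableSpace α] (μ : Measure α) [SigmaFinite μ] {n : ℕ}

lemma measurePreserving_comp_perm (σ : Equiv.Perm (Fin n)) :
    MeasurePreserving (fun c : Fin n → α => c ∘ σ) (Measure.pi fun _ => μ)
      (Measure.pi fun _ => μ) := by
  convert measurePreserving_piCongrLeft (fun _ : Fin n => μ) σ.symm using 1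
  funext c i
  simp [MeasurableEquiv.piCongrLeft, Equiv.piCongrLeft]

lemma ae_apply_ne_apply [NullSingletonClass μ] [MeasurableEq α] {i j : Fin (n + 1)}
    (hij : i ≠ j) : ∀ᵐ c ∂(Measure.pi fun _ => μ), c i ≠ c j := by
  obtain ⟨j', rfl⟩ := Fin.exists_succAbove_eq hij.symm
  have hdiag : MeasurableSet {p : α × (Fin n → α) | p.1 = p.2 j'} :=
    measurableSet_eq_fun measurable_fst ((measurable_pi_apply j').comp measurable_snd)
  refine ae_iff.mpr ?_
  simp only [not_not]
  refine ((measurePreserving_piFinSuccAbove (fun _ => μ) i).measure_preimage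
    hdiag.nullMeasurableSet).trans ?_
  rw [Measure.prod_apply_symm hdiag]
  simp

lemma ae_injective [NullSingletonClass μ] [MeasurableEq α] :
    ∀ᵐ c ∂(Measure.pi fun _ : Fin n => μ), Injective c := by
  rcases n with _ | n
  · exact .of_forall fun c => injective_of_subsingleton c
  have hne : ∀ i j : Fin (n + 1), ∀ᵐ c ∂(Measure.pi fun _ => μ), i ≠ j → c i ≠ c j := by
    intro i j
    rcases eq_or_ne i j with rfl | hij
    · exact .of_forall fun _ h => (h rfl).elim
    · exact (ae_apply_ne_apply μ hij).mono fun _ hc _ => hc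
  filter_upwards [ae_all_iff.mpr fun i => ae_all_iff.mpr (hne i)] with c hc a b hab
  exact not_imp_not.mp (hc a b) hab

end PiMeasure

section Cells

variable (μ : Measure ℝ) [SigmaFinite μ] [NullSingletonClass μ] {n : ℕ}

lemma ae_exists_strictMono_comp :
    ∀ᵐ c ∂(Measure.pi fun _ : Fin n => μ), ∃ τ : Equiv.Perm (Fin n), StrictMono (c ∘ τ) :=
  (ae_injective μ).mono fun c hc =>
    ⟨Tuple.sort c, (Tuple.monotone_sort c).strictMono_of_injective (hc.comp (Equiv.injective _))⟩

theorem map_eq_sum_map_restrict_strictMono {V : Type*} [MeasurableSpace V]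
    {G : (Fin n → ℝ) → V} (hG : Measurable G) {g : Equiv.Perm (Fin n) → (Fin n → ℝ) → V}
    (hg : ∀ τ, Measurable (g τ))
    (hGg : ∀ (τ : Equiv.Perm (Fin n)) c, StrictMono (c ∘ τ) → G c = g τ (c ∘ τ)) :
    (Measure.pi fun _ => μ).map G
      = ∑ τ, ((Measure.pi fun _ => μ).restrict {c | StrictMono c}).map (g τ) := by
  set P := Measure.pi fun _ : Fin n => μ
  have hB : ∀ τ : Equiv.Perm (Fin n), MeasurableSet {c : Fin n → ℝ | StrictMono (c ∘ τ)} :=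
    fun τ => measurable_comp_right τ measurableSet_strictMono
  have hdisj : Pairwise
      (Disjoint on fun τ : Equiv.Perm (Fin n) => {c : Fin n → ℝ | StrictMono (c ∘ τ)}) :=
    fun σ τ hστ => disjoint_left.mpr fun c hσ hτ => hστ (eq_of_strictMono_comp hσ hτ)
  have hcells :
      P = Measure.sum fun τ : Equiv.Perm (Fin n) => P.restrict {c | StrictMono (c ∘ τ)} := by
    rw [← Measure.restrict_iUnion hdisj hB, Measure.restrict_eq_self_of_ae_mem]
    exact (ae_exists_strictMono_comp μ).mono fun c ⟨τ, hτ⟩ => mem_iUnion.mpr ⟨τ, hτ⟩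
  have hcell : ∀ τ : Equiv.Perm (Fin n), (P.restrict {c | StrictMono (c ∘ τ)}).map G
      = (P.restrict {c | StrictMono c}).map (g τ) := by
    intro τ
    rw [← ((measurePreserving_comp_perm μ τ).restrict_preimage measurableSet_strictMono).map_eq,
      Measure.map_map (hg τ) (measurable_comp_right τ)]
    exact Measure.map_congr ((ae_restrict_mem (hB τ)).mono fun c hc => hGg τ c hc)
  conv_lhs => rw [hcells]
  rw [Measure.map_sum hG.aemeasurable, Measure.sum_fintype]
  exact Finset.sum_congr rfl fun τ _ => hcell τ

end Cells

section Stationarity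

variable {k : ℕ} (hk : 0 < k)

lemma sortTuple_removeNth_of_strictMono {c : Fin (k + 1) → ℝ} {τ : Equiv.Perm (Fin (k + 1))}
    (hc : StrictMono (c ∘ τ)) (j : Fin (k + 1)) :
    sortTuple (j.removeNth c) = (c ∘ τ) ∘ (τ.symm j).succAbove := by
  have : j.removeNth c = (c ∘ τ) ∘ τ.symm ∘ j.succAbove := by
    funext i
    simp [Fin.removeNth]
  rw [this, sortTuple_comp_perm_comp_succAbove,
    sortTuple_of_monotone (hc.comp (Fin.strictMono_succAbove _)).monotone]

lemma exclStep_removeNth_of_strictMono {c : Fin (k + 1) → ℝ} {τ : Equiv.Perm (Fin (k + 1))}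
    (hc : StrictMono (c ∘ τ)) (j : Fin (k + 1)) :
    exclStep hk (sortTuple (j.removeNth c)) (c j) = (c ∘ τ) ∘ (τ.symm j + 1).succAbove := by
  have := exclStep_comp_succAbove hk hc (τ.symm j)
  rwa [comp_apply, Equiv.apply_symm_apply, ← sortTuple_removeNth_of_strictMono hc] at this

lemma sum_perm_symm_apply_add_one {M : Type*} [AddCommMonoid M] (f : Fin (k + 1) → M)
    (j : Fin (k + 1)) :
    ∑ τ : Equiv.Perm (Fin (k + 1)), f (τ.symm j + 1)
      = ∑ τ : Equiv.Perm (Fin (k + 1)), f (τ.symm j) := by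
  simpa [Equiv.Perm.mul_def] using
    Equiv.sum_comp (Equiv.mulRight (Equiv.addRight (1 : Fin (k + 1))).symm)
      fun τ : Equiv.Perm (Fin (k + 1)) => f (τ.symm j)

theorem map_exclStep_prod_map_sortTuple (μ : Measure ℝ) [IsProbabilityMeasure μ]
    [NullSingletonClass μ] :
    (((Measure.pi fun _ : Fin k => μ).map sortTuple).prod μ).map
        (fun p : (Fin k → ℝ) × ℝ => exclStep hk p.1 p.2)
      = (Measure.pi fun _ : Fin k => μ).map sortTuple := by
  set P := Measure.pi fun _ : Fin (k + 1) => μ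
  set Pk := Measure.pi fun _ : Fin k => μ
  have hsplit : Pk.prod μ = P.map fun c => (Fin.removeNth 0 c, c 0) := by
    rw [← Measure.prod_swap, ← (measurePreserving_piFinSuccAbove (fun _ => μ) 0).map_eq,
      Measure.map_map measurable_swap (MeasurableEquiv.measurable _)]
    rfl
  have hsplit_meas : Measurable fun c : Fin (k + 1) → ℝ => (Fin.removeNth 0 c, c 0) :=
    measurable_swap.comp (MeasurableEquiv.piFinSuccAbove (fun _ => ℝ) 0).measurable
  have hold_meas : Measurable fun c : Fin (k + 1) → ℝ => sortTuple (Fin.removeNth 0 c) :=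
    measurable_sortTuple.comp (measurable_fst.comp hsplit_meas)
  have hnew_meas : Measurable fun c : Fin (k + 1) → ℝ =>
      exclStep hk (sortTuple (Fin.removeNth 0 c)) (c 0) :=
    hold_meas.exclStep hk (measurable_pi_apply 0)
  have hlhs : ((Pk.map sortTuple).prod μ).map (fun p => exclStep hk p.1 p.2)
      = P.map fun c => exclStep hk (sortTuple (Fin.removeNth 0 c)) (c 0) := by
    rw [← Measure.map_id (μ := μ), Measure.map_prod_map _ _ measurable_sortTuple measurable_id,
      hsplit, Measure.map_map (measurable_sortTuple.prodMap measurable_id) hsplit_meas,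
      Measure.map_map (measurable_fst.exclStep hk measurable_snd)
        ((measurable_sortTuple.prodMap measurable_id).comp hsplit_meas)]
    rfl
  have hrhs : Pk.map sortTuple = P.map fun c => sortTuple (Fin.removeNth 0 c) := by
    rw [show Pk = (Pk.prod μ).map Prod.fst by simp, hsplit,
      Measure.map_map measurable_fst hsplit_meas,
      Measure.map_map measurable_sortTuple (measurable_fst.comp hsplit_meas)]
    rfl
  rw [hlhs, hrhs,
    map_eq_sum_map_restrict_strictMono μ hnew_meas (fun τ => measurable_comp_right _)
      fun τ c hc => exclStep_removeNth_of_strictMono hk hc 0,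
    map_eq_sum_map_restrict_strictMono μ hold_meas (fun τ => measurable_comp_right _)
      fun τ c hc => sortTuple_removeNth_of_strictMono hc 0]
  exact sum_perm_symm_apply_add_one
    (fun r => (P.restrict {c | StrictMono c}).map (· ∘ r.succAbove)) 0

end Stationarity

instance : IsProbabilityMeasure unifI := ⟨by simp [unifI]⟩

instance : NullSingletonClass unifI := by
  unfold unifI
  infer_instance

/-- The law of the order statistics of `k` i.i.d. `Uniform([0,1])` random
variables is stationary for the circular exclusion update with an independent uniform
insertion. -/
theorem stmt0 (k : ℕ) (hk : 0 < k) :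
    (((Measure.pi fun _ : Fin k => unifI).map sortTuple).prod unifI).map
        (fun p : (Fin k → ℝ) × ℝ => exclStep hk p.1 p.2)
      = (Measure.pi fun _ : Fin k => unifI).map sortTuple :=
  map_exclStep_prod_map_sortTuple hk unifI
end

section
/- Let X be a κ-color box-ball configuration with finite support and let (Γ_{t;c}) and (Γ_{t;c+1}) be the carrier processes over X with capacities c and c+1, both started from the all-zero carrier. Then for every time t ≥ 0, the carrier state Γ_{t;c} is obtained from Γ_{t;c+1} by omitting a single entry. -/
/-- One step of the finite-capacity carrier: the carrier is the multiset of its `c` entries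
(colors in `{0,…,κ}`, with `0` denoting an empty slot). An incoming ball `y` replaces the
largest entry strictly smaller than `y` (which exits) if such an entry exists; otherwise the
largest entry exits and `y` enters. -/
noncomputable def capStep (x : Multiset ℕ) (y : ℕ) : Multiset ℕ := by
  classical
  exact if x = 0 then 0
    else if (x.filter fun a => a < y) ≠ 0 then y ::ₘ x.erase ((x.filter fun a => a < y).sup)
    else y ::ₘ x.erase x.sup


lemma msup_mem {s : Multiset ℕ} (h : s ≠ 0) : s.sup ∈ s := by
  induction s using Multiset.induction with
  | empty => simp at h
  | cons a t ih =>
    rcases eq_or_ne t 0 with rfl | ht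
    · simp
    · rw [Multiset.sup_cons]
      rcases le_total a t.sup with h1 | h1
      · rw [sup_eq_right.mpr h1]; exact Multiset.mem_cons_of_mem (ih ht)
      · rw [sup_eq_left.mpr h1]; exact Multiset.mem_cons_self _ _

lemma erase_cons_of_mem (a : ℕ) {m : ℕ} {x : Multiset ℕ} (h : m ∈ x) :
    (a ::ₘ x).erase m = a ::ₘ x.erase m := by
  by_cases hm : a = m
  · subst hm; rw [Multiset.erase_cons_head, Multiset.cons_erase h]
  · exact Multiset.erase_cons_tail _ hm

lemma capStep_cons (x : Multiset ℕ) (a y : ℕ) :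
    ∃ b, capStep (a ::ₘ x) y = b ::ₘ capStep x y := by
  classical
  have hne : (a ::ₘ x) ≠ 0 := Multiset.cons_ne_zero
  rcases eq_or_ne x 0 with rfl | hx
  · refine ⟨y, ?_⟩
    by_cases hay : a < y <;>
      simp [capStep, Multiset.filter_singleton, hay, Multiset.sup_singleton]
  set F := x.filter (fun b => b < y) with hF
  by_cases hay : a < y
  · have hfc : (a ::ₘ x).filter (fun b => b < y) = a ::ₘ F :=
      Multiset.filter_cons_of_pos _ hay
    rcases eq_or_ne F 0 with hF0 | hF0
    · -- F empty: capStep x y = y ::ₘ x.erase x.sup ; capStep x' y = y ::ₘ x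
      have hsx : x.sup ∈ x := msup_mem hx
      refine ⟨x.sup, ?_⟩
      rw [capStep, capStep, if_neg hne, if_neg hx, if_pos (by rw [hfc, hF0]; exact Multiset.cons_ne_zero),
        if_neg (by rw [← hF]; exact not_not_intro hF0)]
      rw [hfc, hF0]
      simp only [Multiset.sup_cons, Multiset.sup_zero, sup_bot_eq, Multiset.erase_cons_head]
      conv_lhs => rw [← Multiset.cons_erase hsx]
      exact Multiset.cons_swap _ _ _
    · have hFsub : F ≤ x := Multiset.filter_le _ _
      have hsF : F.sup ∈ x := Multiset.mem_of_le hFsub (msup_mem hF0)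
      have hsup : (a ::ₘ F).sup = a ⊔ F.sup := Multiset.sup_cons _ _
      rcases le_total a F.sup with h1 | h1
      · refine ⟨a, ?_⟩
        rw [capStep, capStep, if_neg hne, if_neg hx, if_pos (by rw [hfc]; exact Multiset.cons_ne_zero),
          if_pos (by rw [← hF]; exact hF0), hfc, hsup, sup_eq_right.mpr h1,
          erase_cons_of_mem a hsF]
        exact Multiset.cons_swap _ _ _
      · refine ⟨F.sup, ?_⟩
        rw [capStep, capStep, if_neg hne, if_neg hx, if_pos (by rw [hfc]; exact Multiset.cons_ne_zero),
          if_pos (by rw [← hF]; exact hF0), hfc, hsup, sup_eq_left.mpr h1,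
          Multiset.erase_cons_head]
        conv_lhs => rw [← Multiset.cons_erase hsF]
        exact Multiset.cons_swap _ _ _
  · have hfc : (a ::ₘ x).filter (fun b => b < y) = F :=
      Multiset.filter_cons_of_neg _ hay
    rcases eq_or_ne F 0 with hF0 | hF0
    · have hsx : x.sup ∈ x := msup_mem hx
      have hsup : (a ::ₘ x).sup = a ⊔ x.sup := Multiset.sup_cons _ _
      rcases le_total a x.sup with h1 | h1
      · refine ⟨a, ?_⟩
        rw [capStep, capStep, if_neg hne, if_neg hx,
          if_neg (by rw [hfc, hF0]; simp), if_neg (by rw [← hF]; exact not_not_intro hF0),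
          hsup, sup_eq_right.mpr h1, erase_cons_of_mem a hsx]
        exact Multiset.cons_swap _ _ _
      · refine ⟨x.sup, ?_⟩
        rw [capStep, capStep, if_neg hne, if_neg hx,
          if_neg (by rw [hfc, hF0]; simp), if_neg (by rw [← hF]; exact not_not_intro hF0),
          hsup, sup_eq_left.mpr h1, Multiset.erase_cons_head]
        conv_lhs => rw [← Multiset.cons_erase hsx]
        exact Multiset.cons_swap _ _ _
    · have hsF : F.sup ∈ x := Multiset.mem_of_le (Multiset.filter_le _ _) (msup_mem hF0)
      refine ⟨a, ?_⟩
      rw [capStep, capStep, if_neg hne, if_neg hx,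
        if_pos (by rw [hfc]; simpa using hF0), if_pos (by rw [← hF]; exact hF0),
        hfc, erase_cons_of_mem a hsF]
      exact Multiset.cons_swap _ _ _

/-- The capacity-`c` carrier process over the configuration `X`, started from the all-zero
carrier `[0,…,0]` (`c` zeros). -/
noncomputable def carrierC (c : ℕ) (X : ℕ → ℕ) : ℕ → Multiset ℕ
  | 0 => Multiset.replicate c 0
  | s + 1 => capStep (carrierC c X s) (X s)

/-- For a κ-color box-ball configuration `X` with finite support, at every
time `t` the capacity-`c` carrier is obtained from the capacity-`(c+1)` carrier by omitting
a single entry. -/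
theorem stmt3 (κ c : ℕ) (X : ℕ → ℕ) (hfin : (Function.support X).Finite)
    (hcol : ∀ s, X s ≤ κ) :
    ∀ t : ℕ, ∃ a : ℕ, carrierC (c + 1) X t = a ::ₘ carrierC c X t := by
  intro t
  induction t with
  | zero =>
    exact ⟨0, by simp [carrierC, Multiset.replicate_succ]⟩
  | succ s ih =>
    obtain ⟨a, ha⟩ := ih
    show ∃ b, capStep (carrierC (c + 1) X s) (X s) = b ::ₘ capStep (carrierC c X s) (X s)
    rw [ha]
    exact capStep_cons _ _ _
end

section
/- For any κ-color BBS configuration X with finite support and any j ≥ 1, the modified Greene–Kleitman row invariant equals the carrier energy: R_j(X) := max over partitions ℕ = A_1⊔...⊔A_j of Σ_i NA(A_i, X) equals E_j(X) := Σ_{s≥1} 1(X(s) > min Γ_{s−1;j}), where (Γ_{t;j}) is the capacity-j carrier process over X. -/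
/-- The energy `E_j(X) = ∑_s 1(X(s) > min Γ_{s-1;j})` of the capacity-`j` carrier over `X`. -/
noncomputable def energy (j : ℕ) (X : ℕ → ℕ) : ℕ :=
  Set.ncard {s | ∃ a ∈ carrierC j X s, a < X s}

/-- Number of ascents of `Y` along `A` (the first element counting as an ascent iff it
carries a ball). -/
noncomputable def numAsc (A : Set ℕ) (Y : ℕ → ℕ) : ℕ :=
  Set.ncard {b | b ∈ A ∧
    ((∃ a ∈ A, a < b ∧ (∀ c ∈ A, ¬(a < c ∧ c < b)) ∧ Y a < Y b) ∨
      ((∀ a ∈ A, ¬ a < b) ∧ 0 < Y b))}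

/-- The modified Greene–Kleitman row invariant `R_j`. -/
noncomputable def maxAscents (k : ℕ) (Y : ℕ → ℕ) : ℕ :=
  sSup {m | ∃ A : Fin k → Set ℕ,
    (∀ i j, i ≠ j → Disjoint (A i) (A j)) ∧ (⋃ i, A i) = Set.univ ∧
    m = ∑ i, numAsc (A i) Y}

namespace Stmt8Aux

lemma sup_mem (m : Multiset ℕ) (h : m ≠ 0) : m.sup ∈ m := by
  induction m using Multiset.induction_on with
  | empty => exact absurd rfl h
  | cons a s ih =>
    rw [Multiset.sup_cons]
    rcases eq_or_ne s 0 with rfl | hs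
    · simp
    · rcases le_total a s.sup with hle | hle
      · rw [sup_eq_right.2 hle]; exact Multiset.mem_cons_of_mem (ih hs)
      · rw [sup_eq_left.2 hle]; exact Multiset.mem_cons_self _ _

lemma capStep_pos (x : Multiset ℕ) (y : ℕ) (hx : x ≠ 0) (h : (x.filter fun a => a < y) ≠ 0) :
    capStep x y = y ::ₘ x.erase ((x.filter fun a => a < y).sup) := by
  unfold capStep
  rw [if_neg hx, if_pos h]

lemma capStep_neg (x : Multiset ℕ) (y : ℕ) (hx : x ≠ 0) (h : ¬ (x.filter fun a => a < y) ≠ 0) :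
    capStep x y = y ::ₘ x.erase x.sup := by
  unfold capStep
  rw [if_neg hx, if_neg h]

lemma filter_ne_zero_iff (x : Multiset ℕ) (y : ℕ) :
    (x.filter fun a => a < y) ≠ 0 ↔ ∃ a ∈ x, a < y := by
  rw [Ne, Multiset.filter_eq_nil]
  push_neg
  rfl

/-- the number of entries of `m` exceeding `t` -/
noncomputable def cnt (m : Multiset ℕ) (t : ℕ) : ℕ := (m.filter fun a => t < a).card

lemma cnt_cons (y : ℕ) (m : Multiset ℕ) (t : ℕ) :
    cnt (y ::ₘ m) t = (if t < y then 1 else 0) + cnt m t := by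
  unfold cnt
  rw [Multiset.filter_cons]
  split_ifs with h <;> simp <;> omega

lemma cnt_erase {z : ℕ} {m : Multiset ℕ} (h : z ∈ m) (t : ℕ) :
    cnt m t = cnt (m.erase z) t + (if t < z then 1 else 0) := by
  conv_lhs => rw [← Multiset.cons_erase h]
  rw [cnt_cons]; omega

lemma cnt_le_card (m : Multiset ℕ) (t : ℕ) : cnt m t ≤ m.card :=
  Multiset.card_le_card (Multiset.filter_le _ m)

lemma cnt_mono_le {t t' : ℕ} (m : Multiset ℕ) (h : t ≤ t') : cnt m t' ≤ cnt m t :=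
  Multiset.card_le_card (Multiset.monotone_filter_right m (fun a ha => lt_of_le_of_lt h ha))

lemma cnt_mono_sub {m m' : Multiset ℕ} (h : m ≤ m') (t : ℕ) : cnt m t ≤ cnt m' t :=
  Multiset.card_le_card (Multiset.filter_le_filter _ h)

lemma cnt_eq_zero {m : Multiset ℕ} {t : ℕ} (h : ∀ a ∈ m, a ≤ t) : cnt m t = 0 := by
  unfold cnt
  rw [Multiset.filter_eq_nil.2 (fun a ha => not_lt.2 (h a ha))]
  simp

lemma cnt_eq_card {m : Multiset ℕ} {t : ℕ} (h : ∀ a ∈ m, t < a) : cnt m t = m.card := by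
  unfold cnt
  rw [Multiset.filter_eq_self.2 h]

lemma cnt_sup (m : Multiset ℕ) : cnt m m.sup = 0 :=
  cnt_eq_zero (fun a ha => Multiset.le_sup ha)

lemma capStep_card (x : Multiset ℕ) (y : ℕ) (hx : x ≠ 0) : (capStep x y).card = x.card := by
  have hc : 0 < x.card := Multiset.card_pos.2 hx
  by_cases h : (x.filter fun a => a < y) ≠ 0
  · rw [capStep_pos x y hx h, Multiset.card_cons, Multiset.card_erase_of_mem
      (Multiset.mem_of_mem_filter (sup_mem _ h))]
    exact Nat.succ_pred_eq_of_pos hc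
  · rw [capStep_neg x y hx h, Multiset.card_cons, Multiset.card_erase_of_mem (sup_mem x hx)]
    exact Nat.succ_pred_eq_of_pos hc

lemma carrier_card (j : ℕ) (X : ℕ → ℕ) (s : ℕ) : (carrierC j X s).card = j := by
  induction s with
  | zero => simp [carrierC]
  | succ s ih =>
    rcases eq_or_ne (carrierC j X s) 0 with h0 | h0
    · rw [h0] at ih; simp at ih
      show (capStep (carrierC j X s) (X s)).card = j
      rw [h0]; unfold capStep; simp [← ih]
    · show (capStep (carrierC j X s) (X s)).card = j
      rw [capStep_card _ _ h0, ih]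


/-- Key one-step preservation of the threshold-count invariant. -/
lemma key_step {j : ℕ} (hj : 1 ≤ j) (Γ v : Multiset ℕ) (hΓ : Γ.card = j) (hv : v.card = j)
    (q y A E : ℕ) (hq : q ∈ v)
    (hinv : ∀ t, cnt Γ t + A ≤ cnt v t + E) (t : ℕ) :
    cnt (capStep Γ y) t + (A + if q < y then 1 else 0)
      ≤ cnt (y ::ₘ v.erase q) t + (E + if (Γ.filter fun a => a < y) ≠ 0 then 1 else 0) := by
  classical
  have hΓ0 : Γ ≠ 0 := by
    intro h0; rw [h0] at hΓ; simp at hΓ; omega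
  have h2 := cnt_erase hq t
  by_cases hE : ∃ a ∈ Γ, a < y
  · -- energy step
    have hf : (Γ.filter fun a => a < y) ≠ 0 := (filter_ne_zero_iff Γ y).2 hE
    set r := (Γ.filter fun a => a < y).sup with hrdef
    have hrf : r ∈ Γ.filter fun a => a < y := sup_mem _ hf
    have hr : r ∈ Γ := Multiset.mem_of_mem_filter hrf
    have hry : r < y := (Multiset.mem_filter.1 hrf).2
    have hrmax : ∀ a ∈ Γ, a < y → a ≤ r := fun a ha hay =>
      Multiset.le_sup (Multiset.mem_filter.2 ⟨ha, hay⟩)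
    rw [capStep_pos _ _ hΓ0 hf, if_pos hf, ← hrdef, cnt_cons, cnt_cons]
    have h1 := cnt_erase hr t
    by_cases hasc : q < y
    · rw [if_pos hasc]
      by_cases hrt : t < r
      · rw [if_pos hrt] at h1
        have := hinv t
        split_ifs at h2 <;> omega
      · rw [if_neg hrt] at h1
        by_cases hqt : t < q
        · -- bad case: use threshold y - 1
          have hy1 : 1 ≤ y := by omega
          have e1 : cnt Γ t = cnt Γ (y - 1) := by
            unfold cnt
            congr 1
            apply Multiset.filter_congr
            intro a ha
            constructor
            · intro hta
              by_contra hc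
              have : a < y := by omega
              have := hrmax a ha this
              omega
            · intro h; omega
          have e2 : cnt v (y - 1) ≤ cnt (v.erase q) t := by
            have e3 : cnt v (y - 1) = cnt (v.erase q) (y - 1) := by
              rw [cnt_erase hq (y - 1), if_neg (by omega)]; omega
            rw [e3]
            exact cnt_mono_le _ (by omega)
          have := hinv (y - 1)
          rw [if_pos hqt] at h2
          omega
        · rw [if_neg hqt] at h2
          have := hinv t
          omega
    · rw [if_neg hasc]
      have := hinv t
      split_ifs at h1 h2 <;> omega
  · -- non-energy step
    have hf : ¬ (Γ.filter fun a => a < y) ≠ 0 := fun h => hE ((filter_ne_zero_iff Γ y).1 h)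
    have hall : ∀ a ∈ Γ, y ≤ a := by
      intro a ha
      by_contra hc
      exact hE ⟨a, ha, by omega⟩
    have hm : Γ.sup ∈ Γ := sup_mem Γ hΓ0
    have hmax : ∀ a ∈ Γ, a ≤ Γ.sup := fun a ha => Multiset.le_sup ha
    rw [capStep_neg _ _ hΓ0 hf, if_neg hf, cnt_cons, cnt_cons]
    have h1 := cnt_erase hm t
    by_cases hasc : q < y
    · -- T3
      rw [if_pos hasc]
      have hy1 : 1 ≤ y := by omega
      have hGfull : cnt Γ (y - 1) = j := by
        rw [cnt_eq_card (fun a ha => by have := hall a ha; omega), hΓ]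
      have hvy : cnt v (y - 1) + 1 ≤ j := by
        have e3 : cnt v (y - 1) = cnt (v.erase q) (y - 1) := by
          rw [cnt_erase hq (y - 1), if_neg (by omega)]; omega
        have : cnt (v.erase q) (y - 1) ≤ (v.erase q).card := cnt_le_card _ _
        rw [Multiset.card_erase_of_mem hq, Nat.pred_eq_sub_one, hv] at this
        omega
      have hAE := hinv (y - 1)
      by_cases hmt : t < Γ.sup
      · rw [if_pos hmt] at h1
        by_cases hqt : t < q
        · have hGle : cnt Γ t ≤ j := by rw [← hΓ]; exact cnt_le_card _ _
          have e2 : cnt v (y - 1) ≤ cnt (v.erase q) t := by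
            have e3 : cnt v (y - 1) = cnt (v.erase q) (y - 1) := by
              rw [cnt_erase hq (y - 1), if_neg (by omega)]; omega
            rw [e3]
            exact cnt_mono_le _ (by omega)
          rw [if_pos hqt] at h2
          omega
        · rw [if_neg hqt] at h2
          have := hinv t
          omega
      · rw [if_neg hmt] at h1
        have hG0 : cnt Γ t = 0 := cnt_eq_zero (fun a ha => by have := hmax a ha; omega)
        omega
    · -- T4
      rw [if_neg hasc]
      by_cases hmt : t < Γ.sup
      · rw [if_pos hmt] at h1
        have := hinv t
        split_ifs at h2 <;> omega
      · rw [if_neg hmt] at h1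
        have hG0 : cnt Γ t = 0 := cnt_eq_zero (fun a ha => by have := hmax a ha; omega)
        have hA : A ≤ E := by
          have := hinv (Γ.sup ⊔ v.sup)
          have z1 : cnt Γ (Γ.sup ⊔ v.sup) = 0 :=
            cnt_eq_zero (fun a ha => le_trans (hmax a ha) le_sup_left)
          have z2 : cnt v (Γ.sup ⊔ v.sup) = 0 :=
            cnt_eq_zero (fun a ha => le_trans (Multiset.le_sup ha) le_sup_right)
          omega
        omega


lemma map_update_univ {j : ℕ} (f : Fin j → ℕ) (i₀ : Fin j) (y : ℕ) :
    Multiset.map (Function.update f i₀ y) (Finset.univ : Finset (Fin j)).val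
      = y ::ₘ (Multiset.map f (Finset.univ : Finset (Fin j)).val).erase (f i₀) := by
  classical
  have hmem : i₀ ∈ (Finset.univ : Finset (Fin j)).val := Finset.mem_univ_val i₀
  have hcons : (Finset.univ : Finset (Fin j)).val
      = i₀ ::ₘ ((Finset.univ : Finset (Fin j)).val.erase i₀) := (Multiset.cons_erase hmem).symm
  have hnd : (Finset.univ : Finset (Fin j)).val.Nodup := (Finset.univ : Finset (Fin j)).nodup
  have hnot : i₀ ∉ (Finset.univ : Finset (Fin j)).val.erase i₀ :=
    (Multiset.Nodup.notMem_erase hnd)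
  rw [hcons]
  simp only [Multiset.map_cons, Function.update_self, Multiset.erase_cons_head]
  congr 1
  apply Multiset.map_congr rfl
  intro x hx
  exact Function.update_of_ne (by rintro rfl; exact hnot hx) _ _

variable {j : ℕ}

/-- last-value process associated to a slot-selection function `p`. -/
noncomputable def vfun (X : ℕ → ℕ) (p : ℕ → Fin j) : ℕ → Fin j → ℕ
  | 0 => fun _ => 0
  | s + 1 => Function.update (vfun X p s) (p s) (X s)

/-- the multiset of current last values. -/
noncomputable def Vm (X : ℕ → ℕ) (p : ℕ → Fin j) (s : ℕ) : Multiset ℕ :=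
  Multiset.map (vfun X p s) (Finset.univ : Finset (Fin j)).val

lemma Vm_card (X : ℕ → ℕ) (p : ℕ → Fin j) (s : ℕ) : (Vm X p s).card = j := by
  simp [Vm]

lemma Vm_succ (X : ℕ → ℕ) (p : ℕ → Fin j) (s : ℕ) :
    Vm X p (s + 1) = X s ::ₘ (Vm X p s).erase (vfun X p s (p s)) := by
  unfold Vm
  show Multiset.map (Function.update (vfun X p s) (p s) (X s)) _ = _
  rw [map_update_univ]

open Finset in
/-- ascent count up to time `N`. -/
noncomputable def aCnt (X : ℕ → ℕ) (p : ℕ → Fin j) (N : ℕ) : ℕ := by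
  classical
  exact ((Finset.range N).filter (fun s => vfun X p s (p s) < X s)).card

open Finset in
/-- energy count up to time `N`. -/
noncomputable def eCnt (j : ℕ) (X : ℕ → ℕ) (N : ℕ) : ℕ := by
  classical
  exact ((Finset.range N).filter (fun s => ∃ a ∈ carrierC j X s, a < X s)).card

lemma filter_range_succ {P : ℕ → Prop} [DecidablePred P] (N : ℕ) :
    ((Finset.range (N + 1)).filter P).card
      = ((Finset.range N).filter P).card + if P N then 1 else 0 := by
  rw [Finset.range_add_one, Finset.filter_insert]
  split_ifs with h
  · rw [Finset.card_insert_of_notMem (fun hc =>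
      (lt_irrefl N (Finset.mem_range.1 (Finset.mem_filter.1 hc).1)))]
  · omega

lemma aCnt_succ (X : ℕ → ℕ) (p : ℕ → Fin j) (N : ℕ) :
    aCnt X p (N + 1) = aCnt X p N + if vfun X p N (p N) < X N then 1 else 0 := by
  classical
  unfold aCnt
  rw [filter_range_succ]

lemma eCnt_succ (X : ℕ → ℕ) (N : ℕ) :
    eCnt j X (N + 1) = eCnt j X N
      + if ((carrierC j X N).filter fun a => a < X N) ≠ 0 then 1 else 0 := by
  classical
  unfold eCnt
  rw [filter_range_succ]
  congr 1
  simp only [filter_ne_zero_iff]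

lemma invariant (hj : 1 ≤ j) (X : ℕ → ℕ) (p : ℕ → Fin j) (N t : ℕ) :
    cnt (carrierC j X N) t + aCnt X p N ≤ cnt (Vm X p N) t + eCnt j X N := by
  induction N generalizing t with
  | zero =>
    have h1 : cnt (carrierC j X 0) t = 0 := cnt_eq_zero (by
      intro a ha
      show a ≤ t
      have : a = 0 := Multiset.eq_of_mem_replicate ha
      omega)
    have h2 : aCnt X p 0 = 0 := by simp [aCnt]
    omega
  | succ N ih =>
    have hVc : Vm X p N ≠ 0 := by
      intro h
      have := Vm_card X p N
      rw [h] at this; simp at this; omega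
    have hstep := key_step hj (carrierC j X N) (Vm X p N) (carrier_card j X N) (Vm_card X p N)
      (vfun X p N (p N)) (X N) (aCnt X p N) (eCnt j X N)
      (by
        apply Multiset.mem_map_of_mem
        exact Finset.mem_univ_val _)
      (fun t => ih t) t
    rw [aCnt_succ, eCnt_succ, Vm_succ,
      show carrierC j X (N + 1) = capStep (carrierC j X N) (X N) from rfl]
    exact hstep

lemma aCnt_le_eCnt (hj : 1 ≤ j) (X : ℕ → ℕ) (p : ℕ → Fin j) (N : ℕ) :
    aCnt X p N ≤ eCnt j X N := by
  have h := invariant hj X p N ((Vm X p N).sup)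
  rw [cnt_sup] at h
  omega



section Partition

variable (X : ℕ → ℕ) (A : Fin j → Set ℕ)

noncomputable def partOf (h : ∀ b, ∃ i, b ∈ A i) (b : ℕ) : Fin j := (h b).choose

lemma partOf_mem (h : ∀ b, ∃ i, b ∈ A i) (b : ℕ) : b ∈ A (partOf A h b) := (h b).choose_spec

lemma partOf_eq (hdis : ∀ i k, i ≠ k → Disjoint (A i) (A k)) (h : ∀ b, ∃ i, b ∈ A i)
    {b : ℕ} {i : Fin j} (hb : b ∈ A i) : partOf A h b = i := by
  by_contra hc
  exact Set.disjoint_left.1 (hdis _ _ hc) (partOf_mem A h b) hb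

lemma v_of_no (h : ∀ b, ∃ i, b ∈ A i) (i : Fin j) (s : ℕ)
    (hno : ∀ a ∈ A i, ¬ a < s) : vfun X (partOf A h) s i = 0 := by
  induction s with
  | zero => rfl
  | succ s ih =>
    have hne : i ≠ partOf A h s := by
      intro he
      exact hno s (by rw [he]; exact partOf_mem A h s) (by omega)
    show Function.update (vfun X (partOf A h) s) (partOf A h s) (X s) i = 0
    rw [Function.update_of_ne hne]
    exact ih (fun a ha has => hno a ha (by omega))

lemma v_of_max (hdis : ∀ i k, i ≠ k → Disjoint (A i) (A k)) (h : ∀ b, ∃ i, b ∈ A i)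
    {a : ℕ} {i : Fin j} (ha : a ∈ A i) (s : ℕ) (h1 : a < s)
    (h2 : ∀ c ∈ A i, a < c → s ≤ c) : vfun X (partOf A h) s i = X a := by
  induction s with
  | zero => omega
  | succ s ih =>
    rcases Nat.lt_succ_iff_lt_or_eq.1 h1 with hlt | heq
    · have hsni : s ∉ A i := fun hs => by have := h2 s hs hlt; omega
      have hne : i ≠ partOf A h s := by
        intro he
        exact hsni (by rw [he]; exact partOf_mem A h s)
      show Function.update (vfun X (partOf A h) s) (partOf A h s) (X s) i = X a
      rw [Function.update_of_ne hne]
      exact ih hlt (fun c hc hac => by have := h2 c hc hac; omega)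
    · have hpi : partOf A h s = i := partOf_eq A hdis h (heq ▸ ha)
      show Function.update (vfun X (partOf A h) s) (partOf A h s) (X s) i = X a
      rw [hpi, Function.update_self, heq]

open Finset in
lemma numAsc_eq_card (hdis : ∀ i k, i ≠ k → Disjoint (A i) (A k)) (h : ∀ b, ∃ i, b ∈ A i)
    (N : ℕ) (hN : ∀ b, X b ≠ 0 → b < N) (i : Fin j) :
    numAsc (A i) X = ((Finset.range N).filter
      (fun b => partOf A h b = i ∧ vfun X (partOf A h) b (partOf A h b) < X b)).card := by
  classical
  set p := partOf A h with hp
  have hset : {b | b ∈ A i ∧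
      ((∃ a ∈ A i, a < b ∧ (∀ c ∈ A i, ¬(a < c ∧ c < b)) ∧ X a < X b) ∨
        ((∀ a ∈ A i, ¬ a < b) ∧ 0 < X b))}
      = ↑((Finset.range N).filter (fun b => p b = i ∧ vfun X p b (p b) < X b)) := by
    ext b
    simp only [Set.mem_setOf_eq, Finset.coe_filter, Finset.mem_range]
    constructor
    · rintro ⟨hb, hcond⟩
      have hpb : p b = i := partOf_eq A hdis h hb
      have hv : vfun X p b i < X b := by
        rcases hcond with ⟨a, haA, hab, himm, hXa⟩ | ⟨hno, hpos⟩
        · have hvb : vfun X p b i = X a := v_of_max X A hdis h haA b hab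
            (fun c hc hac => le_of_not_gt (fun hlt => himm c hc ⟨hac, hlt⟩))
          omega
        · rw [v_of_no X A h i b hno]
          exact hpos
      refine ⟨?_, hpb, by rw [hpb]; exact hv⟩
      exact hN b (by omega)
    · rintro ⟨hbN, hpb, hv⟩
      have hb : b ∈ A i := by rw [← hpb]; exact partOf_mem A h b
      rw [hpb] at hv
      refine ⟨hb, ?_⟩
      by_cases hex : ∃ a ∈ A i, a < b
      · obtain ⟨a0, ha0, hab0⟩ := hex
        set F := (Finset.range b).filter (· ∈ A i) with hF
        have hne : F.Nonempty := ⟨a0, Finset.mem_filter.2 ⟨Finset.mem_range.2 hab0, ha0⟩⟩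
        set astar := F.max' hne with hastar
        have hmem : astar ∈ F := F.max'_mem hne
        have haA : astar ∈ A i := (Finset.mem_filter.1 hmem).2
        have hab : astar < b := Finset.mem_range.1 (Finset.mem_filter.1 hmem).1
        have hle : ∀ c ∈ A i, c < b → c ≤ astar := fun c hc hcb =>
          F.le_max' c (Finset.mem_filter.2 ⟨Finset.mem_range.2 hcb, hc⟩)
        have hvb : vfun X p b i = X astar := v_of_max X A hdis h haA b hab
          (fun c hc hac => le_of_not_gt (fun hcb => by have := hle c hc hcb; omega))
        left
        exact ⟨astar, haA, hab, fun c hc ⟨h1c, h2c⟩ => by have := hle c hc h2c; omega,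
          by rw [← hvb]; exact hv⟩
      · push_neg at hex
        have hno : ∀ a ∈ A i, ¬ a < b := fun a ha hab => absurd hab (not_lt.2 (by
          by_contra hc
          exact absurd hab (by have := hex a ha; omega)))
        have hvb : vfun X p b i = 0 := v_of_no X A h i b hno
        right
        exact ⟨hno, by rw [hvb] at hv; exact hv⟩
  rw [numAsc, hset, Set.ncard_coe_finset]

open Finset in
lemma sum_numAsc_eq (hdis : ∀ i k, i ≠ k → Disjoint (A i) (A k)) (h : ∀ b, ∃ i, b ∈ A i)
    (N : ℕ) (hN : ∀ b, X b ≠ 0 → b < N) :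
    ∑ i : Fin j, numAsc (A i) X = aCnt X (partOf A h) N := by
  classical
  set p := partOf A h with hp
  have heach := numAsc_eq_card X A hdis h N hN
  calc ∑ i : Fin j, numAsc (A i) X
      = ∑ i : Fin j, (((Finset.range N).filter
          (fun b => vfun X p b (p b) < X b)).filter (fun b => p b = i)).card := by
        refine Finset.sum_congr rfl (fun i _ => ?_)
        rw [heach i, Finset.filter_filter]
        congr 1
        apply Finset.filter_congr
        intro b _
        tauto
    _ = ((Finset.range N).filter (fun b => vfun X p b (p b) < X b)).card :=
        (Finset.card_eq_sum_card_fiberwise (fun x _ => Finset.mem_univ (p x))).symm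
    _ = aCnt X p N := by rw [aCnt]

end Partition


section Lower

/-- the value removed by the carrier at a step. -/
noncomputable def zval (m : Multiset ℕ) (y : ℕ) : ℕ := by
  classical
  exact if (m.filter fun a => a < y) ≠ 0 then (m.filter fun a => a < y).sup else m.sup

lemma zval_mem (m : Multiset ℕ) (y : ℕ) (hm : m ≠ 0) : zval m y ∈ m := by
  unfold zval
  split_ifs with hf
  · exact Multiset.mem_of_mem_filter (sup_mem _ hf)
  · exact sup_mem m hm

lemma capStep_zval (m : Multiset ℕ) (y : ℕ) (hm : m ≠ 0) :
    capStep m y = y ::ₘ m.erase (zval m y) := by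
  unfold zval
  split_ifs with hf
  · exact capStep_pos m y hm hf
  · exact capStep_neg m y hm hf

lemma zval_lt_iff (m : Multiset ℕ) (y : ℕ) (hm : m ≠ 0) :
    zval m y < y ↔ ∃ a ∈ m, a < y := by
  unfold zval
  split_ifs with hf
  · constructor
    · intro _; exact (filter_ne_zero_iff m y).1 hf
    · intro _; exact (Multiset.mem_filter.1 (sup_mem _ hf)).2
  · constructor
    · intro hlt
      exact ⟨m.sup, sup_mem m hm, hlt⟩
    · intro hex
      exact absurd ((filter_ne_zero_iff m y).2 hex) hf

variable (hj : 1 ≤ j)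

lemma univ_val_ne_zero (hj : 1 ≤ j) (f : Fin j → ℕ) :
    Multiset.map f (Finset.univ : Finset (Fin j)).val ≠ 0 := by
  intro h
  have : (Multiset.map f (Finset.univ : Finset (Fin j)).val).card = j := by simp
  rw [h] at this
  simp at this
  omega

noncomputable def selOf (hj : 1 ≤ j) (f : Fin j → ℕ) (y : ℕ) : Fin j :=
  (show ∃ i, f i = zval (Multiset.map f (Finset.univ : Finset (Fin j)).val) y from by
    have hmem := zval_mem _ y (univ_val_ne_zero hj f)
    rcases Multiset.mem_map.1 hmem with ⟨i, _, hi⟩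
    exact ⟨i, hi⟩).choose

lemma selOf_spec (hj : 1 ≤ j) (f : Fin j → ℕ) (y : ℕ) :
    f (selOf hj f y) = zval (Multiset.map f (Finset.univ : Finset (Fin j)).val) y :=
  (show ∃ i, f i = zval (Multiset.map f (Finset.univ : Finset (Fin j)).val) y from by
    have hmem := zval_mem _ y (univ_val_ne_zero hj f)
    rcases Multiset.mem_map.1 hmem with ⟨i, _, hi⟩
    exact ⟨i, hi⟩).choose_spec

noncomputable def Fproc (hj : 1 ≤ j) (X : ℕ → ℕ) : ℕ → Fin j → ℕ
  | 0 => fun _ => 0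
  | s + 1 => Function.update (Fproc hj X s) (selOf hj (Fproc hj X s) (X s)) (X s)

noncomputable def selP (hj : 1 ≤ j) (X : ℕ → ℕ) (s : ℕ) : Fin j :=
  selOf hj (Fproc hj X s) (X s)

lemma Fproc_eq_vfun (hj : 1 ≤ j) (X : ℕ → ℕ) (s : ℕ) :
    vfun X (selP hj X) s = Fproc hj X s := by
  induction s with
  | zero => rfl
  | succ s ih =>
    show Function.update (vfun X (selP hj X) s) (selP hj X s) (X s)
        = Function.update (Fproc hj X s) (selOf hj (Fproc hj X s) (X s)) (X s)
    rw [ih]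
    rfl

lemma Fproc_carrier (hj : 1 ≤ j) (X : ℕ → ℕ) (s : ℕ) :
    Multiset.map (Fproc hj X s) (Finset.univ : Finset (Fin j)).val = carrierC j X s := by
  induction s with
  | zero =>
    show Multiset.map (fun _ => 0) _ = Multiset.replicate j 0
    rw [Multiset.map_const']
    congr 1
    simp
  | succ s ih =>
    show Multiset.map (Function.update (Fproc hj X s) (selOf hj (Fproc hj X s) (X s)) (X s)) _
        = capStep (carrierC j X s) (X s)
    rw [map_update_univ, selOf_spec hj (Fproc hj X s) (X s), ih,
      capStep_zval _ _ (by rw [← ih]; exact univ_val_ne_zero hj _)]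

lemma asc_iff_energy (hj : 1 ≤ j) (X : ℕ → ℕ) (s : ℕ) :
    (vfun X (selP hj X) s (selP hj X s) < X s) ↔ ∃ a ∈ carrierC j X s, a < X s := by
  rw [Fproc_eq_vfun hj X s]
  show Fproc hj X s (selOf hj (Fproc hj X s) (X s)) < X s ↔ _
  rw [selOf_spec hj (Fproc hj X s) (X s), Fproc_carrier hj]
  exact zval_lt_iff _ _ (by rw [← Fproc_carrier hj]; exact univ_val_ne_zero hj _)

lemma aCnt_selP_eq_eCnt (hj : 1 ≤ j) (X : ℕ → ℕ) (N : ℕ) :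
    aCnt X (selP hj X) N = eCnt j X N := by
  classical
  unfold aCnt eCnt
  congr 1
  apply Finset.filter_congr
  intro s _
  rw [asc_iff_energy hj X s]

end Lower

end Stmt8Aux


/-- For any κ-color BBS configuration `X` with finite support and any
`j ≥ 1`, the modified Greene–Kleitman row invariant equals the capacity-`j` carrier
energy: `R_j(X) = E_j(X)`. -/
theorem stmt8 (κ : ℕ) (X : ℕ → ℕ) (hfin : (Function.support X).Finite)
    (hcol : ∀ s, X s ≤ κ) (j : ℕ) (hj : 1 ≤ j) :
    maxAscents j X = energy j X := by
  classical
  obtain ⟨M, hM⟩ := hfin.bddAbove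
  set N := M + 1 with hNdef
  have hN : ∀ b, X b ≠ 0 → b < N := by
    intro b hb
    have : b ≤ M := hM (Function.mem_support.2 hb)
    omega
  have henergy : energy j X = Stmt8Aux.eCnt j X N := by
    rw [energy, Stmt8Aux.eCnt]
    have hset : {s | ∃ a ∈ carrierC j X s, a < X s}
        = ↑((Finset.range N).filter (fun s => ∃ a ∈ carrierC j X s, a < X s)) := by
      ext s
      simp only [Set.mem_setOf_eq, Finset.coe_filter, Finset.mem_range, Set.mem_setOf_eq]
      constructor
      · intro hs
        refine ⟨?_, hs⟩
        obtain ⟨a, _, ha⟩ := hs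
        exact hN s (by omega)
      · exact fun h => h.2
    rw [hset, Set.ncard_coe_finset]
  set S := {m | ∃ A : Fin j → Set ℕ,
    (∀ i k, i ≠ k → Disjoint (A i) (A k)) ∧ (⋃ i, A i) = Set.univ ∧
    m = ∑ i, numAsc (A i) X} with hS
  have hub : ∀ m ∈ S, m ≤ energy j X := by
    rintro m ⟨A, hdis, huniv, rfl⟩
    have h : ∀ b, ∃ i, b ∈ A i := by
      intro b
      have : b ∈ ⋃ i, A i := huniv ▸ Set.mem_univ b
      exact Set.mem_iUnion.1 this
    rw [Stmt8Aux.sum_numAsc_eq X A hdis h N hN, henergy]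
    exact Stmt8Aux.aCnt_le_eCnt hj X _ N
  have hmem : energy j X ∈ S := by
    refine ⟨fun i => {s | Stmt8Aux.selP hj X s = i}, ?_, ?_, ?_⟩
    · intro i k hik
      rw [Set.disjoint_left]
      rintro s hs1 hs2
      exact hik (hs1 ▸ hs2 ▸ rfl)
    · ext s
      simp only [Set.mem_iUnion, Set.mem_setOf_eq, Set.mem_univ, iff_true]
      exact ⟨_, rfl⟩
    · set A := fun i => {s | Stmt8Aux.selP hj X s = i} with hA
      have hdis : ∀ i k, i ≠ k → Disjoint (A i) (A k) := by
        intro i k hik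
        rw [Set.disjoint_left]
        rintro s hs1 hs2
        exact hik (hs1 ▸ hs2 ▸ rfl)
      have h : ∀ b, ∃ i, b ∈ A i := fun b => ⟨_, rfl⟩
      rw [Stmt8Aux.sum_numAsc_eq X A hdis h N hN]
      have hpart : Stmt8Aux.partOf A h = Stmt8Aux.selP hj X := by
        funext b
        have := Stmt8Aux.partOf_mem A h b
        exact (this : Stmt8Aux.selP hj X b = _).symm
      rw [hpart, Stmt8Aux.aCnt_selP_eq_eCnt hj X N, henergy]
  rw [maxAscents]
  exact le_antisymm (csSup_le ⟨energy j X, hmem⟩ hub) (le_csSup ⟨energy j X, hub⟩ hmem)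
end

section
/- For any κ-color BBS configuration X with finite support with at least one ball of the maximal color κ and each positive color used exactly once, the capacity-j carrier energy is invariant under the cyclic single-color update: E_j(X) = E_j(T_κ(X)) for all j ≥ 1. -/
/-- The number of balls of color `κ` held by the single-color carrier sweeping over `X`
(used to implement the move `K_κ` of all balls of color `κ`). -/
def kcar (κ : ℕ) (X : ℕ → ℕ) : ℕ → ℕ
  | 0 => 0
  | s + 1 => if X s = κ then kcar κ X s + 1
      else if X s = 0 then kcar κ X s - 1 else kcar κ X s

/-- The configuration after all balls of color `κ` have jumped (the operator `K_κ`). -/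
def Kkappa (κ : ℕ) (X : ℕ → ℕ) : ℕ → ℕ := fun s =>
  if X s = κ then 0
  else if X s = 0 then (if 0 < kcar κ X s then κ else 0) else X s

/-- The cyclic update `T_κ`: all balls of color `κ` jump, are relabeled with color `1`,
and every other positive color is increased by `1`. -/
def Tkappa (κ : ℕ) (X : ℕ → ℕ) : ℕ → ℕ := fun s =>
  if Kkappa κ X s = 0 then 0
  else if Kkappa κ X s = κ then 1 else Kkappa κ X s + 1

/-!
Let `p` be the position of the unique `κ`-ball and `q` the first empty box to its right. Then
`T_κ X` is the relabelling `a ↦ a + 1` (`a > 0`) of `X`, except that box `p` is emptied and box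
`q` holds a `1`. The carrier rule only compares entries, so it commutes with this strictly
monotone relabelling: before `p` the two carriers are images of each other and their energy
indicators agree. At `p` the `X`-carrier picks up `κ`, an energy hit, while the other carrier
keeps an empty slot in its place. Between `p` and `q` every exchange of the `X`-carrier is
matched by the other carrier, until the `X`-carrier drops `κ` (at the latest at `q`) at a box
where only the other carrier scores. This compensates the hit at `p`; afterwards the carriers
agree up to one slot holding `0` on one side and `1` on the other, which never affects the
indicators.
-/

open Multiset

theorem Multiset.sup_mem_of_ne_zero {α : Type*} [LinearOrder α] [OrderBot α] {m : Multiset α}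
    (hm : m ≠ 0) : m.sup ∈ m := by
  induction m using Multiset.induction with
  | empty => exact absurd rfl hm
  | cons a s ih =>
    rw [sup_cons]
    rcases eq_or_ne s 0 with rfl | hs
    · simp
    rcases max_choice a s.sup with h | h <;> rw [h]
    · exact mem_cons_self a s
    · exact mem_cons_of_mem (ih hs)

theorem Multiset.sup_map_of_monotone {α β : Type*} [LinearOrder α] [OrderBot α] [LinearOrder β]
    [OrderBot β] {f : α → β} (hf : Monotone f) (hbot : f ⊥ = ⊥) (m : Multiset α) :
    (m.map f).sup = f m.sup := by
  induction m using Multiset.induction with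
  | empty => simp [hbot]
  | cons a s ih => rw [map_cons, sup_cons, sup_cons, ih, hf.map_sup]

theorem Multiset.filter_map_lt_of_strictMono {α β : Type*} [LinearOrder α] [LinearOrder β]
    {f : α → β} (hf : StrictMono f) (x : Multiset α) (y : α) :
    (x.map f).filter (· < f y) = (x.filter (· < y)).map f := by
  rw [filter_map]
  exact congrArg _ (filter_congr fun a _ => hf.lt_iff_lt)

def bump (a : ℕ) : ℕ := if a = 0 then 0 else a + 1

@[simp] lemma bump_zero : bump 0 = 0 := rfl

lemma bump_of_pos {a : ℕ} (h : 0 < a) : bump a = a + 1 := if_neg h.ne'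

lemma bump_strictMono : StrictMono bump := by
  intro a b h
  rw [bump_of_pos (by omega : 0 < b)]
  unfold bump
  split <;> omega

lemma bump_ne_one (a : ℕ) : bump a ≠ 1 := by
  unfold bump
  split <;> omega

lemma sup_map_bump (m : Multiset ℕ) : (m.map bump).sup = bump m.sup :=
  sup_map_of_monotone bump_strictMono.monotone bump_zero m

section CapStep

variable {x : Multiset ℕ} {y : ℕ}

lemma capStep_of_filter_ne_zero (h : x.filter (· < y) ≠ 0) :
    capStep x y = y ::ₘ x.erase (x.filter (· < y)).sup := by
  have hx : x ≠ 0 := by rintro rfl; exact h (filter_zero _)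
  simp only [capStep, if_neg hx, if_pos h]

lemma capStep_of_forall_le (hx : x ≠ 0) (h : ∀ a ∈ x, y ≤ a) :
    capStep x y = y ::ₘ x.erase x.sup := by
  have hf : x.filter (· < y) = 0 := filter_eq_nil.2 fun a ha => (h a ha).not_gt
  simp only [capStep, if_neg hx, hf, ne_eq, not_true_eq_false, if_false]

lemma capStep_of_forall_lt (hx : x ≠ 0) (h : ∀ a ∈ x, a < y) :
    capStep x y = y ::ₘ x.erase x.sup := by
  have hf : x.filter (· < y) = x := filter_eq_self.2 h
  rw [capStep_of_filter_ne_zero (hf.symm ▸ hx), hf]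

lemma capStep_ne_zero (hx : x ≠ 0) : capStep x y ≠ 0 := by
  simp only [capStep, if_neg hx]
  split_ifs <;> exact cons_ne_zero

lemma mem_capStep {b : ℕ} (hb : b ∈ capStep x y) : b = y ∨ b ∈ x := by
  unfold capStep at hb
  split_ifs at hb
  · exact absurd hb (notMem_zero b)
  all_goals exact (mem_cons.1 hb).imp_right mem_of_mem_erase

lemma capStep_map {f : ℕ → ℕ} (hf : StrictMono f) (hf0 : f 0 = 0) (x : Multiset ℕ)
    (y : ℕ) :
    capStep (x.map f) (f y) = (capStep x y).map f := by
  have hsup (m : Multiset ℕ) : (m.map f).sup = f m.sup := sup_map_of_monotone hf.monotone hf0 m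
  unfold capStep
  simp only [map_eq_zero, filter_map_lt_of_strictMono hf, ne_eq]
  split_ifs <;> simp [hsup, map_erase f hf.injective]

lemma exists_mem_map_lt_iff {f : ℕ → ℕ} (hf : StrictMono f) :
    (∃ b ∈ x.map f, b < f y) ↔ ∃ a ∈ x, a < y := by
  simp [hf.lt_iff_lt]

end CapStep

/-- While the `X`-carrier holds the `κ`-ball, the `T_κ X`-carrier holds an empty slot in its
place. -/
def Carrying (κ : ℕ) (x y : Multiset ℕ) : Prop :=
  ∃ n, (∀ a ∈ n, a < κ) ∧ x = κ ::ₘ n ∧ y = 0 ::ₘ n.map bump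

/-- After the jump, an empty slot of the `X`-carrier may correspond to a slot holding the
relabelled ball `1`; since the inputs of `T_κ X` there are `0` or at least `2`, this slot is
indistinguishable from an empty one. -/
def Landed (x y : Multiset ℕ) : Prop :=
  ∃ m, x = 0 ::ₘ m ∧ y = 1 ::ₘ m.map bump

section CoupledSteps

variable {κ c : ℕ} {x y : Multiset ℕ}

lemma carrying_capStep_of_forall_lt (hx : x ≠ 0) (h : ∀ a ∈ x, a < κ) :
    Carrying κ (capStep x κ) (capStep (x.map bump) 0) := by
  refine ⟨x.erase x.sup, fun a ha => h a (mem_of_mem_erase ha), capStep_of_forall_lt hx h, ?_⟩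
  rw [capStep_of_forall_le (by simpa using hx) fun b _ => Nat.zero_le b, sup_map_bump,
    map_erase bump bump_strictMono.injective]

lemma erase_cons_zero_map_bump {n : Multiset ℕ} {M : ℕ} (hM : M ∈ n) :
    (0 ::ₘ n.map bump).erase (bump M) = 0 ::ₘ (n.erase M).map bump := by
  rcases eq_or_ne M 0 with rfl | hM0
  · rw [bump_zero, erase_cons_head]
    conv_lhs => rw [← cons_erase hM, map_cons, bump_zero]
  · rw [erase_cons_tail _ (bump_of_pos (Nat.pos_of_ne_zero hM0) ▸ by omega),
      map_erase bump bump_strictMono.injective]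

lemma Carrying.capStep_of_exists_lt (hxy : Carrying κ x y) (hcκ : c < κ)
    (h : ∃ a ∈ x, a < c) : Carrying κ (capStep x c) (capStep y (bump c)) := by
  obtain ⟨n, hn, rfl, rfl⟩ := hxy
  have hxf : (κ ::ₘ n).filter (· < c) = n.filter (· < c) := filter_cons_of_neg _ (by omega)
  have hF : n.filter (· < c) ≠ 0 := by
    obtain ⟨a, ha, hac⟩ := h
    rcases mem_cons.1 ha with rfl | ha
    · omega
    · exact fun h0 => notMem_zero a (h0 ▸ mem_filter.2 ⟨ha, hac⟩)
  set M := (n.filter (· < c)).sup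
  have hMF : M ∈ n.filter (· < c) := sup_mem_of_ne_zero hF
  have hMn : M ∈ n := mem_of_mem_filter hMF
  have hMc : M < c := (mem_filter.1 hMF).2
  have hc : 0 < c := by omega
  have hyf : (0 ::ₘ n.map bump).filter (· < bump c) = 0 ::ₘ (n.filter (· < c)).map bump := by
    rw [filter_cons_of_pos _ (by rw [bump_of_pos hc]; omega),
      filter_map_lt_of_strictMono bump_strictMono]
  have hysup : ((0 ::ₘ n.map bump).filter (· < bump c)).sup = bump M := by
    rw [hyf, sup_cons, sup_map_bump]
    exact max_eq_right (Nat.zero_le _)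
  refine ⟨c ::ₘ n.erase M, ?_, ?_, ?_⟩
  · intro a ha
    rcases mem_cons.1 ha with rfl | ha
    · exact hcκ
    · exact hn a (mem_of_mem_erase ha)
  · rw [capStep_of_filter_ne_zero (hxf ▸ hF), hxf, erase_cons_tail n (show κ ≠ M by omega),
      cons_swap]
  · rw [capStep_of_filter_ne_zero (by rw [hyf]; exact cons_ne_zero), hysup,
      erase_cons_zero_map_bump hMn, map_cons, cons_swap]

lemma Carrying.capStep_of_not_exists_lt (hxy : Carrying κ x y) (hc : 0 < c)
    (h : ¬∃ a ∈ x, a < c) :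
    capStep y (bump c) = (capStep x c).map bump ∧ ∀ a ∈ capStep x c, 0 < a := by
  obtain ⟨n, hn, rfl, rfl⟩ := hxy
  simp only [not_exists, not_and, not_lt] at h
  have hsup : (κ ::ₘ n).sup = κ := by
    rw [sup_cons, max_eq_left (Multiset.sup_le.2 fun a ha => (hn a ha).le)]
  have hx : capStep (κ ::ₘ n) c = c ::ₘ n := by
    rw [capStep_of_forall_le cons_ne_zero h, hsup, erase_cons_head]
  have hyf : (0 ::ₘ n.map bump).filter (· < bump c) = {0} := by
    rw [filter_cons_of_pos _ (by rw [bump_of_pos hc]; omega),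
      filter_map_lt_of_strictMono bump_strictMono,
      filter_eq_nil.2 fun a ha => (h a (mem_cons_of_mem ha)).not_gt]
    rfl
  refine ⟨?_, ?_⟩
  · rw [capStep_of_filter_ne_zero (by rw [hyf]; exact singleton_ne_zero 0), hyf, hx,
      sup_singleton, erase_cons_head, map_cons]
  · intro a ha
    rw [hx] at ha
    rcases mem_cons.1 ha with rfl | ha
    · exact hc
    · exact hc.trans_le (h a (mem_cons_of_mem ha))

lemma Carrying.landed_capStep_zero (hxy : Carrying κ x y) :
    Landed (capStep x 0) (capStep y 1) := by
  obtain ⟨n, hn, rfl, rfl⟩ := hxy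
  have hsup : (κ ::ₘ n).sup = κ := by
    rw [sup_cons, max_eq_left (Multiset.sup_le.2 fun a ha => (hn a ha).le)]
  have hyf : (0 ::ₘ n.map bump).filter (· < 1) ≠ 0 :=
    fun h0 => notMem_zero 0 (h0 ▸ mem_filter.2 ⟨mem_cons_self _ _, one_pos⟩)
  have hysup : ((0 ::ₘ n.map bump).filter (· < 1)).sup = 0 :=
    Nat.eq_zero_of_le_zero (Multiset.sup_le.2 fun b hb => by have := (mem_filter.1 hb).2; omega)
  refine ⟨n, ?_, ?_⟩
  · rw [capStep_of_forall_le cons_ne_zero fun a _ => Nat.zero_le a, hsup, erase_cons_head]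
  · rw [capStep_of_filter_ne_zero hyf, hysup, erase_cons_head]

lemma landed_capStep_zero_of_forall_pos (hx : x ≠ 0) (h : ∀ a ∈ x, 0 < a) :
    Landed (capStep x 0) (capStep (x.map bump) 1) := by
  have hge : ∀ b ∈ x.map bump, 1 ≤ b := by
    simp only [mem_map, forall_exists_index, and_imp, forall_apply_eq_imp_iff₂]
    intro a ha
    rw [bump_of_pos (h a ha)]
    omega
  refine ⟨x.erase x.sup, capStep_of_forall_le hx fun a _ => Nat.zero_le a, ?_⟩
  rw [capStep_of_forall_le (by simpa using hx) hge, sup_map_bump,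
    map_erase bump bump_strictMono.injective]

lemma landed_or_eq_map_erase_sup {m G : Multiset ℕ} (hG : G ≤ m) :
    Landed ((0 ::ₘ m).erase (0 ::ₘ G).sup)
        ((1 ::ₘ m.map bump).erase (1 ::ₘ G.map bump).sup) ∨
      (1 ::ₘ m.map bump).erase (1 ::ₘ G.map bump).sup =
        ((0 ::ₘ m).erase (0 ::ₘ G).sup).map bump := by
  rw [sup_cons, sup_cons, sup_map_bump]
  rcases Nat.eq_zero_or_pos G.sup with hM | hM
  · right
    rw [hM, bump_zero, max_self, max_eq_left zero_le_one, erase_cons_head,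
      erase_cons_head]
  · left
    have hMm : G.sup ∈ m := mem_of_le hG (sup_mem_of_ne_zero fun h0 => by simp [h0] at hM)
    refine ⟨m.erase G.sup, ?_, ?_⟩
    · rw [max_eq_right (Nat.zero_le _), erase_cons_tail _ hM.ne]
    · rw [bump_of_pos hM, max_eq_right (by omega), ← bump_of_pos hM,
        erase_cons_tail _ (bump_ne_one _).symm, map_erase bump bump_strictMono.injective]

lemma landed_or_eq_map_cons (c : ℕ) (h : Landed x y ∨ y = x.map bump) :
    Landed (c ::ₘ x) (bump c ::ₘ y) ∨ bump c ::ₘ y = (c ::ₘ x).map bump := by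
  rcases h with ⟨m, rfl, rfl⟩ | rfl
  · exact .inl ⟨c ::ₘ m, cons_swap _ _ _, by rw [map_cons, cons_swap]⟩
  · exact .inr (map_cons _ _ _).symm

lemma Landed.capStep (hxy : Landed x y) (c : ℕ) :
    Landed (capStep x c) (capStep y (bump c)) ∨
      capStep y (bump c) = (capStep x c).map bump := by
  obtain ⟨m, rfl, rfl⟩ := hxy
  rcases Nat.eq_zero_or_pos c with rfl | hc
  · rw [bump_zero, capStep_of_forall_le cons_ne_zero fun a _ => Nat.zero_le a,
      capStep_of_forall_le cons_ne_zero fun a _ => Nat.zero_le a]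
    exact landed_or_eq_map_cons 0 (landed_or_eq_map_erase_sup le_rfl)
  · have hxf : (0 ::ₘ m).filter (· < c) = 0 ::ₘ m.filter (· < c) := filter_cons_of_pos _ hc
    have hyf :
        (1 ::ₘ m.map bump).filter (· < bump c) = 1 ::ₘ (m.filter (· < c)).map bump := by
      rw [filter_cons_of_pos _ (by rw [bump_of_pos hc]; omega),
        filter_map_lt_of_strictMono bump_strictMono]
    rw [capStep_of_filter_ne_zero (hxf ▸ cons_ne_zero),
      capStep_of_filter_ne_zero (hyf ▸ cons_ne_zero), hxf, hyf]
    exact landed_or_eq_map_cons c (landed_or_eq_map_erase_sup (filter_le _ _))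

lemma Landed.exists_mem_lt_bump_iff (hxy : Landed x y) (c : ℕ) :
    (∃ b ∈ y, b < bump c) ↔ ∃ a ∈ x, a < c := by
  obtain ⟨m, rfl, rfl⟩ := hxy
  rcases Nat.eq_zero_or_pos c with rfl | hc
  · simp
  · exact iff_of_true ⟨1, mem_cons_self _ _, by rw [bump_of_pos hc]; omega⟩
      ⟨0, mem_cons_self _ _, hc⟩

end CoupledSteps

section Carrier

variable {c : ℕ} {X Y : ℕ → ℕ} {s : ℕ}

lemma carrierC_succ : carrierC c X (s + 1) = capStep (carrierC c X s) (X s) := rfl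

lemma carrierC_ne_zero (hc : c ≠ 0) : carrierC c X s ≠ 0 := by
  induction s with
  | zero =>
    show replicate c 0 ≠ 0
    exact fun h => hc (by simpa using congrArg card h)
  | succ s ih => exact capStep_ne_zero ih

lemma mem_carrierC {a : ℕ} (ha : a ∈ carrierC c X s) : a = 0 ∨ ∃ t < s, X t = a := by
  induction s with
  | zero => exact .inl (eq_of_mem_replicate ha)
  | succ s ih =>
    rcases mem_capStep ha with rfl | ha
    · exact .inr ⟨s, lt_add_one s, rfl⟩
    · exact (ih ha).imp_right fun ⟨t, ht, hXt⟩ => ⟨t, ht.trans (lt_add_one s), hXt⟩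

def EnergyHit (c : ℕ) (X : ℕ → ℕ) (s : ℕ) : Prop := ∃ a ∈ carrierC c X s, a < X s

noncomputable instance : DecidablePred (EnergyHit c X) :=
  fun _ => Multiset.decidableExistsMultiset

lemma energy_eq_count {N : ℕ} (hN : ∀ s, N ≤ s → X s = 0) :
    energy c X = Nat.count (EnergyHit c X) N := by
  rw [Nat.count_eq_card_filter_range, energy, ← Set.ncard_coe_finset]
  congr
  ext s
  rw [Finset.mem_val, Finset.mem_filter, Finset.mem_range]
  refine ⟨fun hs => ⟨Nat.lt_of_not_le fun h => ?_, hs⟩, fun hs => hs.2⟩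
  obtain ⟨a, -, ha⟩ := hs
  rw [hN s h] at ha
  exact Nat.not_lt_zero a ha

variable {f : ℕ → ℕ}

lemma energyHit_iff_of_eq_map (hf : StrictMono f)
    (hc : carrierC c Y s = (carrierC c X s).map f) (hY : Y s = f (X s)) :
    EnergyHit c Y s ↔ EnergyHit c X s := by
  unfold EnergyHit
  rw [hc, hY, exists_mem_map_lt_iff hf]

lemma carrierC_succ_eq_map (hf : StrictMono f) (hf0 : f 0 = 0)
    (hc : carrierC c Y s = (carrierC c X s).map f) (hY : Y s = f (X s)) :
    carrierC c Y (s + 1) = (carrierC c X (s + 1)).map f := by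
  rw [carrierC_succ, carrierC_succ, hc, hY, capStep_map hf hf0]

lemma carrierC_eq_map_of_forall_lt (hf : StrictMono f) (hf0 : f 0 = 0)
    (h : ∀ t < s, Y t = f (X t)) :
    carrierC c Y s = (carrierC c X s).map f ∧
      Nat.count (EnergyHit c Y) s = Nat.count (EnergyHit c X) s := by
  induction s with
  | zero => simp [carrierC, map_replicate, hf0]
  | succ s ih =>
    obtain ⟨hc, hcount⟩ := ih fun t ht => h t (ht.trans (lt_add_one s))
    have hY := h s (lt_add_one s)
    refine ⟨carrierC_succ_eq_map hf hf0 hc hY, ?_⟩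
    simp only [Nat.count_succ, hcount, energyHit_iff_of_eq_map hf hc hY]

lemma energyHit_of_carrying {κ : ℕ} (hcar : Carrying κ (carrierC c X s) (carrierC c Y s))
    (hY : 0 < Y s) : EnergyHit c Y s := by
  obtain ⟨n, -, -, hy⟩ := hcar
  exact ⟨0, hy ▸ mem_cons_self 0 _, hY⟩

end Carrier

/-- `Y = T_κ X`, where the unique `κ`-ball of `X` sits at `p` and `q` is the first empty box to
its right. -/
structure KappaJump (κ p q : ℕ) (X Y : ℕ → ℕ) : Prop where
  left_lt_right : p < q
  apply_left : X p = κ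
  lt_of_ne_left : ∀ s, s ≠ p → X s < κ
  apply_right : X q = 0
  ne_zero_of_between : ∀ s, p < s → s < q → X s ≠ 0
  image_left : Y p = 0
  image_right : Y q = 1
  image_of_ne : ∀ s, s ≠ p → s ≠ q → Y s = bump (X s)

namespace KappaJump

variable {κ p q j : ℕ} {X Y : ℕ → ℕ}

lemma carrying_succ_left (h : KappaJump κ p q X Y) (hj : j ≠ 0) :
    Carrying κ (carrierC j X (p + 1)) (carrierC j Y (p + 1)) ∧
      Nat.count (EnergyHit j X) (p + 1) = Nat.count (EnergyHit j Y) (p + 1) + 1 := by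
  obtain ⟨hc, hcount⟩ :=
    carrierC_eq_map_of_forall_lt bump_strictMono bump_zero (s := p) (c := j) fun t ht =>
      h.image_of_ne t ht.ne (by have := h.left_lt_right; omega)
  have hlt : ∀ a ∈ carrierC j X p, a < κ := fun a ha => by
    rcases mem_carrierC ha with rfl | ⟨t, ht, rfl⟩
    · exact (Nat.zero_le _).trans_lt (h.lt_of_ne_left q h.left_lt_right.ne')
    · exact h.lt_of_ne_left t ht.ne
  have hne : carrierC j X p ≠ 0 := carrierC_ne_zero hj
  have hX : EnergyHit j X p := by
    obtain ⟨a, ha⟩ := exists_mem_of_ne_zero hne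
    exact ⟨a, ha, h.apply_left ▸ hlt a ha⟩
  have hY : ¬EnergyHit j Y p := by
    rintro ⟨a, -, ha⟩
    exact Nat.not_lt_zero a (h.image_left ▸ ha)
  refine ⟨?_, ?_⟩
  · rw [carrierC_succ, carrierC_succ, h.apply_left, h.image_left, hc]
    exact carrying_capStep_of_forall_lt hne hlt
  · rw [Nat.count_succ, Nat.count_succ, if_pos hX, if_neg hY, hcount]

lemma carrying_or_eq_map_of_between (h : KappaJump κ p q X Y) (hj : j ≠ 0) {s : ℕ}
    (hps : p < s) (hsq : s ≤ q) :
    (Carrying κ (carrierC j X s) (carrierC j Y s) ∧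
        Nat.count (EnergyHit j X) s = Nat.count (EnergyHit j Y) s + 1) ∨
      (carrierC j Y s = (carrierC j X s).map bump ∧ (∀ a ∈ carrierC j X s, 0 < a) ∧
        Nat.count (EnergyHit j Y) s = Nat.count (EnergyHit j X) s) := by
  induction s, hps using Nat.le_induction with
  | base => exact .inl (h.carrying_succ_left hj)
  | succ s hps ih =>
    have hXs : 0 < X s := Nat.pos_of_ne_zero (h.ne_zero_of_between s hps (by omega))
    have hYs : Y s = bump (X s) := h.image_of_ne s (by omega) (by omega)
    rcases ih (by omega) with ⟨hcar, hcount⟩ | ⟨hc, hpos, hcount⟩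
    · have hY : EnergyHit j Y s :=
        energyHit_of_carrying hcar (by rw [hYs, bump_of_pos hXs]; omega)
      rw [carrierC_succ, carrierC_succ, hYs, Nat.count_succ, Nat.count_succ, if_pos hY]
      by_cases hX : EnergyHit j X s
      · refine .inl ⟨hcar.capStep_of_exists_lt (h.lt_of_ne_left s (by omega)) hX, ?_⟩
        rw [if_pos hX, hcount]
      · obtain ⟨hmap, hpos⟩ := hcar.capStep_of_not_exists_lt hXs hX
        refine .inr ⟨hmap, hpos, ?_⟩
        rw [if_neg hX, hcount]
    · refine .inr ⟨carrierC_succ_eq_map bump_strictMono bump_zero hc hYs, fun a ha => ?_, ?_⟩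
      · rcases mem_capStep ha with rfl | ha
        exacts [hXs, hpos a ha]
      · simp only [Nat.count_succ, hcount, energyHit_iff_of_eq_map bump_strictMono hc hYs]

lemma landed_or_eq_map_succ_right (h : KappaJump κ p q X Y) (hj : j ≠ 0) :
    (Landed (carrierC j X (q + 1)) (carrierC j Y (q + 1)) ∨
        carrierC j Y (q + 1) = (carrierC j X (q + 1)).map bump) ∧
      Nat.count (EnergyHit j Y) (q + 1) = Nat.count (EnergyHit j X) (q + 1) := by
  have hX : ¬EnergyHit j X q := by
    rintro ⟨a, -, ha⟩
    exact Nat.not_lt_zero a (h.apply_right ▸ ha)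
  rw [carrierC_succ, carrierC_succ, h.apply_right, h.image_right, Nat.count_succ, Nat.count_succ,
    if_neg hX]
  rcases h.carrying_or_eq_map_of_between hj h.left_lt_right le_rfl with
    ⟨hcar, hcount⟩ | ⟨hc, hpos, hcount⟩
  · have hY : EnergyHit j Y q := energyHit_of_carrying hcar (h.image_right ▸ one_pos)
    exact ⟨.inl hcar.landed_capStep_zero, by rw [if_pos hY, hcount]⟩
  · have hY : ¬EnergyHit j Y q := by
      rintro ⟨b, hb, hb1⟩
      rw [hc] at hb
      obtain ⟨a, ha, rfl⟩ := mem_map.1 hb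
      rw [h.image_right, bump_of_pos (hpos a ha)] at hb1
      omega
    rw [hc]
    exact ⟨.inl (landed_capStep_zero_of_forall_pos (carrierC_ne_zero hj) hpos),
      by rw [if_neg hY, hcount]⟩

lemma landed_or_eq_map_of_gt (h : KappaJump κ p q X Y) (hj : j ≠ 0) {s : ℕ} (hqs : q < s) :
    (Landed (carrierC j X s) (carrierC j Y s) ∨
        carrierC j Y s = (carrierC j X s).map bump) ∧
      Nat.count (EnergyHit j Y) s = Nat.count (EnergyHit j X) s := by
  induction s, hqs using Nat.le_induction with
  | base => exact h.landed_or_eq_map_succ_right hj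
  | succ s hqs ih =>
    have hYs : Y s = bump (X s) :=
      h.image_of_ne s (by have := h.left_lt_right; omega) (by omega)
    obtain ⟨hc | hc, hcount⟩ := ih
    · have hiff : EnergyHit j Y s ↔ EnergyHit j X s := by
        unfold EnergyHit
        rw [hYs]
        exact hc.exists_mem_lt_bump_iff (X s)
      rw [carrierC_succ, carrierC_succ, hYs]
      exact ⟨hc.capStep (X s), by simp only [Nat.count_succ, hcount, hiff]⟩
    · exact ⟨.inr (carrierC_succ_eq_map bump_strictMono bump_zero hc hYs),
        by simp only [Nat.count_succ, hcount, energyHit_iff_of_eq_map bump_strictMono hc hYs]⟩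

theorem energy_eq (h : KappaJump κ p q X Y) (hj : j ≠ 0) {N : ℕ}
    (hN : ∀ s, N ≤ s → X s = 0) : energy j X = energy j Y := by
  have hXM : ∀ s, max N (q + 1) ≤ s → X s = 0 := fun s hs => hN s (le_of_max_le_left hs)
  have hYM : ∀ s, max N (q + 1) ≤ s → Y s = 0 := fun s hs => by
    have := h.left_lt_right
    have := le_of_max_le_right hs
    rw [h.image_of_ne s (by omega) (by omega), hXM s hs, bump_zero]
  rw [energy_eq_count hXM, energy_eq_count hYM,
    (h.landed_or_eq_map_of_gt hj (Nat.lt_of_succ_le (le_max_right N (q + 1)))).2]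

end KappaJump

section Tkappa

variable {κ p q : ℕ} {X : ℕ → ℕ}

lemma kcar_eq_of_first_zero (hXp : X p = κ) (huniq : ∀ s, X s = κ → s = p) (hpq : p < q)
    (hXq : X q = 0) (hmid : ∀ s, p < s → s < q → X s ≠ 0) (s : ℕ) :
    kcar κ X s = if p < s ∧ s ≤ q then 1 else 0 := by
  induction s with
  | zero => simp [kcar]
  | succ s ih =>
    simp only [kcar, ih]
    by_cases hκ : X s = κ
    · obtain rfl := huniq s hκ
      simp [hκ, hpq]
    · have hsp : s ≠ p := fun h => hκ (h ▸ hXp)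
      by_cases h0 : X s = 0
      · have : ¬(p < s ∧ s < q) := fun h => hmid s h.1 h.2 h0
        simp only [h0, if_true]
        split_ifs <;> omega
      · have hsq : s ≠ q := fun h => h0 (h ▸ hXq)
        simp only [hκ, h0, if_false]
        split_ifs <;> omega

lemma kappaJump_Tkappa (hXp : X p = κ) (huniq : ∀ s, X s = κ → s = p)
    (hcol : ∀ s, X s ≤ κ) (hpq : p < q) (hXq : X q = 0)
    (hmid : ∀ s, p < s → s < q → X s ≠ 0) :
    KappaJump κ p q X (Tkappa κ X) := by
  have hkcar := kcar_eq_of_first_zero hXp huniq hpq hXq hmid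
  have hκ : κ ≠ 0 := fun h0 => hpq.ne' (huniq q (hXq.trans h0.symm))
  have hne : ∀ s, s ≠ p → X s ≠ κ := fun s hs h => hs (huniq s h)
  refine ⟨hpq, hXp, fun s hs => (hcol s).lt_of_ne (hne s hs), hXq, hmid, ?_, ?_, ?_⟩
  · simp [Tkappa, Kkappa, hXp]
  · simp [Tkappa, Kkappa, hXq, hkcar, hpq, hκ, Ne.symm hκ]
  · intro s hsp hsq
    by_cases h0 : X s = 0
    · have : ¬(p < s ∧ s ≤ q) := fun h => hmid s h.1 (lt_of_le_of_ne h.2 hsq) h0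
      simp [Tkappa, Kkappa, h0, hkcar, this, Ne.symm hκ]
    · simp [Tkappa, Kkappa, h0, hne s hsp, bump]

end Tkappa

lemma exists_eq_zero_of_finite_support {X : ℕ → ℕ} (hfin : (Function.support X).Finite) :
    ∃ N, ∀ s, N ≤ s → X s = 0 := by
  obtain ⟨B, hB⟩ := hfin.bddAbove
  exact ⟨B + 1, fun s hs => by_contra fun h => absurd (hB h) (by omega)⟩

lemma exists_first_zero_gt {X : ℕ → ℕ} {N : ℕ} (hN : ∀ s, N ≤ s → X s = 0) (p : ℕ) :
    ∃ q, p < q ∧ X q = 0 ∧ ∀ s, p < s → s < q → X s ≠ 0 := by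
  have hex : ∃ q, p < q ∧ X q = 0 := ⟨max N (p + 1), by omega, hN _ (le_max_left _ _)⟩
  obtain ⟨hpq, hq⟩ := Nat.find_spec hex
  exact ⟨Nat.find hex, hpq, hq, fun s hps hsq h0 => Nat.find_min hex hsq ⟨hps, h0⟩⟩

/-- For a κ-color BBS configuration `X` with finite support, with at least
one ball of the maximal color `κ` and each positive color used exactly once, the
capacity-`j` carrier energy is invariant under the cyclic single-color update:
`E_j(X) = E_j(T_κ(X))` for all `j ≥ 1`. -/
theorem stmt9 (κ : ℕ) (X : ℕ → ℕ) (hfin : (Function.support X).Finite)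
    (hcol : ∀ s, X s ≤ κ)
    (hstd : ∀ c, 1 ≤ c → c ≤ κ → ∃! s, X s = c)
    (j : ℕ) (hj : 1 ≤ j) :
    energy j X = energy j (Tkappa κ X) := by
  rcases Nat.eq_zero_or_pos κ with rfl | hκ
  · have hT : Tkappa 0 X = X := funext fun s => by simp [Tkappa, Kkappa, Nat.le_zero.mp (hcol s)]
    rw [hT]
  obtain ⟨p, hXp, huniq⟩ := hstd κ hκ le_rfl
  obtain ⟨N, hN⟩ := exists_eq_zero_of_finite_support hfin
  obtain ⟨q, hpq, hXq, hmid⟩ := exists_first_zero_gt hN p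
  exact (kappaJump_Tkappa hXp huniq hcol hpq hXq hmid).energy_eq (by omega) hN
end

section
/- Suppose p_0 > max(p_1,...,p_κ). Then the Markov chain SΓ_t = (m_1(Γ_t),...,m_κ(Γ_t)) recording ball multiplicities of the infinite-capacity carrier process over the i.i.d. configuration X^p is irreducible and aperiodic, and the product-geometric distribution π(n_1,...,n_κ) = ∏_{i=1}^κ (1 − p_i/p_0)(p_i/p_0)^{n_i} on (ℤ_{≥0})^κ is its unique stationary distribution. -/
/-- Decrement the count at the largest index of the finset `s` (if `s` is nonempty). -/
noncomputable def dec1 {κ : ℕ} (m : Fin κ → ℕ) (s : Finset (Fin κ)) : Fin κ → ℕ := by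
  classical
  exact if h : s.Nonempty then Function.update m (s.max' h) (m (s.max' h) - 1) else m

/-- Transition of the multiplicity chain `SΓ` of the infinite-capacity carrier: index
`i : Fin κ` records the number of balls of color `i+1` in the carrier.  An incoming empty
box (`none`) ejects a ball of the largest color present; an incoming ball of color `j+1`
(`some j`) enters the carrier and ejects a ball of the largest color `< j+1` present
(nothing is ejected if there is none). -/
noncomputable def carTrans {κ : ℕ} (m : Fin κ → ℕ) : Option (Fin κ) → (Fin κ → ℕ)
  | none => by
      classical
      exact dec1 m (Finset.univ.filter fun i => 0 < m i)
  | some j => by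
      classical
      exact dec1 (Function.update m j (m j + 1))
        (Finset.univ.filter fun i => i < j ∧ 0 < m i)

/-- The probability of the incoming symbol: `p 0` for an empty box, `p (i+1)` for a ball of
color `i+1`. -/
noncomputable def pOf {κ : ℕ} (p : Fin (κ + 1) → ℝ) : Option (Fin κ) → ℝ
  | none => p 0
  | some i => p i.succ

/-- The one-step transition kernel of the multiplicity chain. -/
noncomputable def carK {κ : ℕ} (p : Fin (κ + 1) → ℝ) (m m' : Fin κ → ℕ) : ℝ := by
  classical
  exact ∑ y : Option (Fin κ), if carTrans m y = m' then pOf p y else 0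

/-- The `t`-step transition kernel of the multiplicity chain. -/
noncomputable def carKpow {κ : ℕ} (p : Fin (κ + 1) → ℝ) :
    ℕ → (Fin κ → ℕ) → (Fin κ → ℕ) → ℝ
  | 0, m, m' => by
      classical
      exact if m = m' then 1 else 0
  | t + 1, m, m' => ∑' z : Fin κ → ℕ, carKpow p t m z * carK p z m'

/-- The product-geometric distribution `π(n_1,…,n_κ) = ∏ (1 - p_i/p_0)(p_i/p_0)^{n_i}`. -/
noncomputable def carPi {κ : ℕ} (p : Fin (κ + 1) → ℝ) (m : Fin κ → ℕ) : ℝ :=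
  ∏ i : Fin κ, (1 - p i.succ / p 0) * (p i.succ / p 0) ^ (m i)

/-!
Encode the carrier by its vector `m` of ball counts and the incoming symbol by
`y : Option (Fin κ)`, with `none` an empty box. The transition `Ψ (m, y) = (m', x)`, where `x`
is the ejected ball, conserves `m + oneBall y`; it is injective because `y` is recovered from
`(m', x)` as the smallest ball of `m'` above `x`, and since the level sets of the conserved
quantity are finite it is a bijection. Along a transition `π m' * p x = π m * p y` (the paper's
`exp(wt x) exp(wt y) = exp(wt y') exp(wt x')`), so summing over the preimages of `m'` under `Ψ`
gives `π K = π`.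

Empty boxes empty any carrier and then keep it empty, and running `Ψ⁻¹` with empty output
refills it ball by ball, so `m` reaches `m'` in exactly `t` steps for every `t ≥ |m| + |m'|`.
Uniqueness then holds for any irreducible stochastic kernel.
-/

open Finset Function Relation

structure IsStochasticKernel {α : Type*} (K : α → α → ℝ) : Prop where
  nonneg : ∀ x y, 0 ≤ K x y
  hasSum : ∀ x, HasSum (K x) 1

namespace IsStochasticKernel

variable {α : Type*} {K : α → α → ℝ} {f : α → ℝ}

theorem le_one (hK : IsStochasticKernel K) (x y : α) : K x y ≤ 1 :=
  le_hasSum (hK.hasSum x) y fun z _ => hK.nonneg x z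

theorem summable_mul (hK : IsStochasticKernel K) (hf0 : ∀ x, 0 ≤ f x) (hf : Summable f)
    (y : α) : Summable fun x => f x * K x y :=
  hf.of_nonneg_of_le (fun x => mul_nonneg (hf0 x) (hK.nonneg x y))
    fun x => mul_le_of_le_one_right (hf0 x) (hK.le_one x y)

theorem mul_le_tsum_mul (hK : IsStochasticKernel K) (hf0 : ∀ x, 0 ≤ f x) (hf : Summable f)
    (x y : α) : f x * K x y ≤ ∑' z, f z * K z y :=
  (hK.summable_mul hf0 hf y).le_tsum x fun z _ => mul_nonneg (hf0 z) (hK.nonneg z y)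

theorem hasSum_tsum_mul (hK : IsStochasticKernel K) (hf0 : ∀ x, 0 ≤ f x) (hf : Summable f) :
    HasSum (fun y => ∑' x, f x * K x y) (∑' x, f x) := by
  set g : α × α → ℝ := fun q => f q.1 * K q.1 q.2
  have hg0 : 0 ≤ g := fun q => mul_nonneg (hf0 q.1) (hK.nonneg q.1 q.2)
  have hrow : ∀ x, HasSum (fun y => g (x, y)) (f x) := fun x => by
    simpa using (hK.hasSum x).mul_left (f x)
  have hg : Summable g :=
    (summable_prod_of_nonneg hg0).2 ⟨fun x => (hrow x).summable, by
      simpa only [(hrow _).tsum_eq] using hf⟩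
  have htot : ∑' q, g q = ∑' x, f x := (hg.hasSum.prod_fiberwise hrow).tsum_eq.symm
  rw [← htot]
  exact ((Equiv.prodComm α α).hasSum_iff.2 hg.hasSum).prod_fiberwise
    fun y => (hK.summable_mul hf0 hf y).hasSum

theorem comp {L : α → α → ℝ} (hK : IsStochasticKernel K) (hL : IsStochasticKernel L) :
    IsStochasticKernel fun x z => ∑' y, K x y * L y z where
  nonneg x z := tsum_nonneg fun y => mul_nonneg (hK.nonneg x y) (hL.nonneg y z)
  hasSum x := (hK.hasSum x).tsum_eq ▸ hL.hasSum_tsum_mul (hK.nonneg x) (hK.hasSum x).summable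

theorem tsum_mul_eq_of_le (hK : IsStochasticKernel K) (hf0 : ∀ x, 0 ≤ f x) (hf : Summable f)
    (hle : ∀ y, f y ≤ ∑' x, f x * K x y) (y : α) : ∑' x, f x * K x y = f y := by
  have hdiff : HasSum (fun y => ∑' x, f x * K x y - f y) 0 := by
    simpa using (hK.hasSum_tsum_mul hf0 hf).sub hf.hasSum
  have := congrFun ((hasSum_zero_iff_of_nonneg fun y => sub_nonneg.2 (hle y)).1 hdiff) y
  simpa [sub_eq_zero] using this

theorem pos_of_reflTransGen (hK : IsStochasticKernel K) (hf0 : ∀ x, 0 ≤ f x) (hf : Summable f)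
    (hstat : ∀ y, ∑' x, f x * K x y = f y) {x y : α}
    (hxy : ReflTransGen (fun a b => 0 < K a b) x y) (hx : 0 < f x) : 0 < f y := by
  induction hxy with
  | refl => exact hx
  | @tail b c _ hbc ih =>
    rw [← hstat c]
    exact (mul_pos ih hbc).trans_le (hK.mul_le_tsum_mul hf0 hf b c)

/-- The positive part of the difference of two stationary vectors is again stationary, hence
either zero or positive everywhere; the second alternative contradicts equality of masses. -/
theorem le_of_stationary (hK : IsStochasticKernel K)
    (hirr : ∀ x y, ReflTransGen (fun a b => 0 < K a b) x y) {μ ν : α → ℝ}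
    (hμ0 : ∀ x, 0 ≤ μ x) (hν0 : ∀ x, 0 ≤ ν x) (hμ : HasSum μ 1) (hν : HasSum ν 1)
    (hμs : ∀ y, ∑' x, μ x * K x y = μ y) (hνs : ∀ y, ∑' x, ν x * K x y = ν y) : μ ≤ ν := by
  set d : α → ℝ := fun x => max (μ x - ν x) 0
  have hd0 : ∀ x, 0 ≤ d x := fun x => le_max_right _ _
  have hd : Summable d := hμ.summable.of_nonneg_of_le hd0 fun x =>
    max_le (sub_le_self _ (hν0 x)) (hμ0 x)
  have hdiff : ∀ y, ∑' x, (μ x - ν x) * K x y = μ y - ν y := fun y => by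
    simp only [sub_mul]
    rw [Summable.tsum_sub (hK.summable_mul hμ0 hμ.summable y)
      (hK.summable_mul hν0 hν.summable y), hμs, hνs]
  have hle : ∀ y, d y ≤ ∑' x, d x * K x y := fun y =>
    max_le ((hdiff y).symm.trans_le <| Summable.tsum_le_tsum
        (fun x => mul_le_mul_of_nonneg_right (le_max_left _ _) (hK.nonneg x y))
        (by simpa only [sub_mul] using
          (hK.summable_mul hμ0 hμ.summable y).sub (hK.summable_mul hν0 hν.summable y))
        (hK.summable_mul hd0 hd y))
      (tsum_nonneg fun x => mul_nonneg (hd0 x) (hK.nonneg x y))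
  intro x
  by_contra hx
  have hpos : ∀ y, 0 < d y := fun y =>
    hK.pos_of_reflTransGen hd0 hd (hK.tsum_mul_eq_of_le hd0 hd hle) (hirr x y)
      (lt_max_of_lt_left (sub_pos.2 (not_le.1 hx)))
  have hlt : ∀ y, ν y < μ y := fun y => by
    have := hpos y
    simp only [d, lt_max_iff, lt_irrefl, or_false, sub_pos] at this
    exact this
  exact lt_irrefl (1 : ℝ) (hasSum_lt (fun y => (hlt y).le) (hlt x) hν hμ)

theorem eq_of_stationary (hK : IsStochasticKernel K)
    (hirr : ∀ x y, ReflTransGen (fun a b => 0 < K a b) x y) {μ ν : α → ℝ}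
    (hμ0 : ∀ x, 0 ≤ μ x) (hν0 : ∀ x, 0 ≤ ν x) (hμ : HasSum μ 1) (hν : HasSum ν 1)
    (hμs : ∀ y, ∑' x, μ x * K x y = μ y) (hνs : ∀ y, ∑' x, ν x * K x y = ν y) : μ = ν :=
  le_antisymm (hK.le_of_stationary hirr hμ0 hν0 hμ hν hμs hνs)
    (hK.le_of_stationary hirr hν0 hμ0 hν hμ hνs hμs)

end IsStochasticKernel

theorem hasSum_prod_fin {β : Type*} {n : ℕ} {f : Fin n → β → ℝ} {a : Fin n → ℝ}
    (hf0 : ∀ i b, 0 ≤ f i b) (hf : ∀ i, HasSum (f i) (a i)) :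
    HasSum (fun m : Fin n → β => ∏ i, f i (m i)) (∏ i, a i) := by
  induction n with
  | zero => simp
  | succ n ih =>
    set g : (Fin n → β) → ℝ := fun m => ∏ i, f i.succ (m i)
    have hg : HasSum g (∏ i : Fin n, a i.succ) := ih (fun i => hf0 i.succ) fun i => hf i.succ
    have hs : Summable fun q : β × (Fin n → β) => f 0 q.1 * g q.2 :=
      (hf 0).summable.mul_of_nonneg hg.summable (fun b => hf0 0 b)
        fun m => prod_nonneg fun i _ => hf0 i.succ (m i)
    have hcons : (fun m => ∏ i, f i (m i)) ∘ Fin.consEquiv (fun _ => β) =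
        fun q => f 0 q.1 * g q.2 := by
      ext ⟨b, m⟩
      simp [g, Fin.consEquiv, Fin.prod_univ_succ]
    rw [Fin.prod_univ_succ, ← (Fin.consEquiv fun _ => β).hasSum_iff, hcons]
    exact (hf 0).mul hg hs

section OptionalExtrema

variable {α : Type*} [LinearOrder α]

def maxOpt (s : Finset α) : Option α :=
  if h : s.Nonempty then some (s.max' h) else none

def minOpt (s : Finset α) : Option α :=
  if h : s.Nonempty then some (s.min' h) else none

theorem maxOpt_eq_none {s : Finset α} : maxOpt s = none ↔ s = ∅ := by
  unfold maxOpt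
  split_ifs with h
  · simp [h.ne_empty]
  · simp [not_nonempty_iff_eq_empty.1 h]

theorem maxOpt_eq_some {s : Finset α} {a : α} :
    maxOpt s = some a ↔ a ∈ s ∧ ∀ b ∈ s, b ≤ a := by
  unfold maxOpt
  split_ifs with h
  · simp [max'_eq_iff]
  · simp [not_nonempty_iff_eq_empty.1 h]

theorem minOpt_eq_none {s : Finset α} : minOpt s = none ↔ s = ∅ := by
  unfold minOpt
  split_ifs with h
  · simp [h.ne_empty]
  · simp [not_nonempty_iff_eq_empty.1 h]

theorem minOpt_eq_some {s : Finset α} {a : α} :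
    minOpt s = some a ↔ a ∈ s ∧ ∀ b ∈ s, a ≤ b := by
  unfold minOpt
  split_ifs with h
  · simp [min'_eq_iff]
  · simp [not_nonempty_iff_eq_empty.1 h]

end OptionalExtrema

section Carrier

variable {κ : ℕ}

def oneBall : Option (Fin κ) → Fin κ → ℕ
  | none => 0
  | some j => Pi.single j 1

theorem oneBall_none : oneBall (κ := κ) none = 0 := rfl

theorem oneBall_apply_eq_zero {x : Option (Fin κ)} {k : Fin κ} (h : ∀ a ∈ x, a ≠ k) :
    oneBall x k = 0 := by
  cases x with
  | none => rfl
  | some a => simp [oneBall, Ne.symm (h a rfl)]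

theorem sum_oneBall_some (j : Fin κ) : ∑ i, oneBall (some j) i = 1 := by
  simp [oneBall]

/-- `carOut m y` is the ball ejected when `y` enters the carrier `m`, and `carIn m' x` recovers the
entering ball from the new carrier and the ejected one. Colour `0` (`none`) lies above every ball
as an input and below every ball as an output. -/
def carOut (m : Fin κ → ℕ) (y : Option (Fin κ)) : Option (Fin κ) :=
  maxOpt (univ.filter fun i => 0 < m i ∧ ∀ j ∈ y, i < j)

def carIn (m' : Fin κ → ℕ) (x : Option (Fin κ)) : Option (Fin κ) :=
  minOpt (univ.filter fun k => 0 < m' k ∧ ∀ i ∈ x, i < k)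

theorem carTrans_eq_dec1 (m : Fin κ → ℕ) (y : Option (Fin κ)) :
    carTrans m y = dec1 (m + oneBall y) (univ.filter fun i => 0 < m i ∧ ∀ j ∈ y, i < j) := by
  cases y with
  | none => simp [carTrans, oneBall]
  | some j =>
    have hbump : update m j (m j + 1) = m + Pi.single j 1 := by
      ext i
      by_cases hij : i = j <;> simp [hij]
    simp [carTrans, oneBall, hbump, and_comm]

theorem dec1_add_oneBall_maxOpt {m : Fin κ → ℕ} {s : Finset (Fin κ)} (hs : ∀ i ∈ s, 0 < m i) :
    dec1 m s + oneBall (maxOpt s) = m := by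
  unfold dec1 maxOpt
  split_ifs with h
  · have := hs _ (s.max'_mem h)
    ext i
    by_cases hi : i = s.max' h
    · subst hi; simp [oneBall]; omega
    · simp [oneBall, hi]
  · simp [oneBall]

theorem carTrans_add_oneBall_carOut (m : Fin κ → ℕ) (y : Option (Fin κ)) :
    carTrans m y + oneBall (carOut m y) = m + oneBall y := by
  rw [carTrans_eq_dec1, carOut]
  refine dec1_add_oneBall_maxOpt fun i hi => ?_
  simp only [mem_filter, mem_univ, true_and] at hi
  simpa using Nat.lt_add_right _ hi.1

theorem carIn_carTrans_carOut (m : Fin κ → ℕ) (y : Option (Fin κ)) :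
    carIn (carTrans m y) (carOut m y) = y := by
  have hcons k : carTrans m y k + oneBall (carOut m y) k = m k + oneBall y k :=
    congrFun (carTrans_add_oneBall_carOut m y) k
  have hbelow : ∀ k, 0 < m k → (∀ j ∈ y, k < j) → ∃ a ∈ carOut m y, k ≤ a := by
    intro k hk hky
    cases hout : carOut m y with
    | none =>
      have := filter_eq_empty_iff.1 (maxOpt_eq_none.1 hout)
      exact absurd ⟨hk, hky⟩ (this (mem_univ k))
    | some a =>
      exact ⟨a, rfl, (maxOpt_eq_some.1 hout).2 k (mem_filter.2 ⟨mem_univ k, hk, hky⟩)⟩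
  have habove : ∀ a ∈ carOut m y, ∀ j ∈ y, a < j := fun a ha =>
    (mem_filter.1 (maxOpt_eq_some.1 ha).1).2.2
  cases y with
  | none =>
    refine minOpt_eq_none.2 (filter_eq_empty_iff.2 fun k _ hk => ?_)
    obtain ⟨a, ha, hka⟩ := hbelow k (by have := hcons k; simp [oneBall] at this; omega) (by simp)
    exact (hk.2 a ha).not_ge hka
  | some j =>
    have hj := hcons j
    rw [oneBall_apply_eq_zero fun a ha => (habove a ha j rfl).ne] at hj
    simp only [oneBall, Pi.single_eq_same] at hj
    refine minOpt_eq_some.2 ⟨mem_filter.2 ⟨mem_univ j, by omega, fun a ha => habove a ha j rfl⟩,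
      fun b hb => ?_⟩
    simp only [mem_filter, mem_univ, true_and] at hb
    by_contra hbj
    replace hbj := not_le.1 hbj
    have hb' := hcons b
    rw [oneBall_apply_eq_zero (x := some j) (by simpa using hbj.ne')] at hb'
    obtain ⟨a, ha, hba⟩ := hbelow b (by omega) (by simpa using hbj)
    exact (hb.2 a ha).not_ge hba

/-- The paper's `Ψ (x, y) = (y', x')`, with the carrier in the first component. -/
noncomputable def carPsi (q : (Fin κ → ℕ) × Option (Fin κ)) : (Fin κ → ℕ) × Option (Fin κ) :=
  (carTrans q.1 q.2, carOut q.1 q.2)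

theorem carPsi_injective : Injective (carPsi (κ := κ)) := by
  rintro ⟨m₁, y₁⟩ ⟨m₂, y₂⟩ h
  simp only [carPsi, Prod.mk.injEq] at h
  obtain rfl : y₁ = y₂ := by
    rw [← carIn_carTrans_carOut m₁ y₁, ← carIn_carTrans_carOut m₂ y₂, h.1, h.2]
  have h' := carTrans_add_oneBall_carOut m₁ y₁
  rw [h.1, h.2, carTrans_add_oneBall_carOut] at h'
  rw [add_right_cancel h']

theorem carPsi_surjective : Surjective (carPsi (κ := κ)) := by
  intro r
  set L : Set ((Fin κ → ℕ) × Option (Fin κ)) := {q | q.1 + oneBall q.2 = r.1 + oneBall r.2}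
  have hL : L.Finite := ((Set.finite_Iic (r.1 + oneBall r.2)).prod Set.finite_univ).subset
    fun q hq => ⟨fun i => (Nat.le_add_right _ _).trans_eq (congrFun hq i), trivial⟩
  have hmaps : Set.MapsTo carPsi L L := fun q hq =>
    (carTrans_add_oneBall_carOut q.1 q.2).trans hq
  obtain ⟨q, -, hq⟩ :=
    ((hL.injOn_iff_bijOn_of_mapsTo hmaps).1 carPsi_injective.injOn).surjOn (show r ∈ L from rfl)
  exact ⟨q, hq⟩

variable {p : Fin (κ + 1) → ℝ}

theorem carPi_add_oneBall_mul (hp0 : p 0 ≠ 0) (m : Fin κ → ℕ) (y : Option (Fin κ)) :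
    carPi p (m + oneBall y) * p 0 = carPi p m * pOf p y := by
  cases y with
  | none => simp [oneBall, pOf]
  | some j =>
    have hsingle :
        ∏ i : Fin κ, (p i.succ / p 0) ^ (Pi.single j 1 : Fin κ → ℕ) i = p j.succ / p 0 := by
      rw [prod_eq_single j (fun i _ hij => by simp [hij]) (by simp)]
      simp
    simp only [carPi, oneBall, Pi.add_apply, pow_add, ← mul_assoc, prod_mul_distrib, hsingle, pOf]
    field_simp

theorem carPi_carTrans_mul_pOf (hp0 : p 0 ≠ 0) (m : Fin κ → ℕ) (y : Option (Fin κ)) :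
    carPi p (carTrans m y) * pOf p (carOut m y) = carPi p m * pOf p y := by
  rw [← carPi_add_oneBall_mul hp0, ← carPi_add_oneBall_mul hp0, carTrans_add_oneBall_carOut]

theorem sum_pOf (hsum : ∑ i, p i = 1) : ∑ y, pOf p y = 1 := by
  rw [Fintype.sum_option, ← hsum, Fin.sum_univ_succ]
  rfl

theorem carPi_stationary (hp0 : p 0 ≠ 0) (hsum : ∑ i, p i = 1) (m' : Fin κ → ℕ) :
    ∑' m, carPi p m * carK p m m' = carPi p m' := by
  set G : (Fin κ → ℕ) × Option (Fin κ) → ℝ :=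
    fun r => if r.1 = m' then carPi p r.1 * pOf p r.2 else 0
  have hG : HasSum G (carPi p m') := by
    have : HasSum G (∑ r ∈ {m'} ×ˢ univ, G r) := hasSum_sum_of_ne_finset_zero fun r hr => by
      simp only [mem_product, mem_singleton, mem_univ, and_true] at hr
      simp [G, hr]
    simpa [G, sum_product, ← mul_sum, sum_pOf hsum] using this
  have hGΨ : HasSum (G ∘ carPsi) (carPi p m') :=
    (Equiv.ofBijective _ ⟨carPsi_injective, carPsi_surjective⟩).hasSum_iff.2 hG
  refine (hGΨ.prod_fiberwise fun m => hasSum_fintype fun y => (G ∘ carPsi) (m, y)).tsum_eq ▸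
    tsum_congr fun m => ?_
  simp only [carK, mul_sum, mul_ite, mul_zero, comp_apply, G, carPsi, carPi_carTrans_mul_pOf hp0]

theorem carOut_none_eq_none_iff {m : Fin κ → ℕ} : carOut m none = none ↔ m = 0 := by
  simp [carOut, maxOpt_eq_none, filter_eq_empty_iff, funext_iff]

theorem sum_carTrans_none (m : Fin κ → ℕ) : ∑ i, carTrans m none i = ∑ i, m i - 1 := by
  have h := congrArg (fun v : Fin κ → ℕ => ∑ i, v i) (carTrans_add_oneBall_carOut m none)
  simp only [Pi.add_apply, sum_add_distrib, oneBall_none, Pi.zero_apply, add_zero] at h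
  cases hout : carOut m none with
  | none =>
    obtain rfl := carOut_none_eq_none_iff.1 hout
    rw [hout, oneBall_none] at h
    simp only [Pi.zero_apply, sum_const_zero] at h ⊢
    omega
  | some a =>
    rw [hout, sum_oneBall_some] at h
    omega

theorem foldl_replicate_none_carTrans {m : Fin κ → ℕ} {n : ℕ} (h : ∑ i, m i ≤ n) :
    (List.replicate n none).foldl carTrans m = 0 := by
  induction n generalizing m with
  | zero => simpa [funext_iff] using h
  | succ n ih =>
    rw [List.replicate_succ, List.foldl_cons]
    exact ih (by rw [sum_carTrans_none]; omega)

theorem exists_foldl_carTrans_zero (m' : Fin κ → ℕ) :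
    ∃ ys : List (Option (Fin κ)), ys.length = ∑ i, m' i ∧ ys.foldl carTrans 0 = m' := by
  obtain ⟨n, hn⟩ : ∃ n, ∑ i, m' i = n := ⟨_, rfl⟩
  induction n generalizing m' with
  | zero => exact ⟨[], hn.symm, funext fun i => (sum_eq_zero_iff.1 hn i (mem_univ i)).symm⟩
  | succ n ih =>
    obtain ⟨⟨m, y⟩, hq⟩ := carPsi_surjective (m', none)
    simp only [carPsi, Prod.mk.injEq] at hq
    have hcons := carTrans_add_oneBall_carOut m y
    rw [hq.1, hq.2] at hcons
    cases y with
    | none =>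
      have hm' : m' = m := by simpa [oneBall] using hcons
      rw [hm', carOut_none_eq_none_iff.1 hq.2] at hn
      simp at hn
    | some j =>
      have hm' : m' = m + oneBall (some j) := by simpa [oneBall] using hcons
      have hsum' : ∑ i, m' i = ∑ i, m i + 1 := by
        rw [hm']
        simp only [Pi.add_apply, sum_add_distrib, sum_oneBall_some]
      obtain ⟨ys, hlen, hys⟩ := ih m (by omega)
      exact ⟨ys ++ [some j], by simp [hlen, hsum'], by simp [hys, hq.1]⟩

theorem exists_foldl_carTrans_eq (m m' : Fin κ → ℕ) {t : ℕ} (ht : ∑ i, m i + ∑ i, m' i ≤ t) :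
    ∃ ys : List (Option (Fin κ)), ys.length = t ∧ ys.foldl carTrans m = m' := by
  obtain ⟨zs, hlen, hzs⟩ := exists_foldl_carTrans_zero m'
  refine ⟨List.replicate (t - ∑ i, m' i) none ++ zs, by simp [hlen]; omega, ?_⟩
  rw [List.foldl_append, foldl_replicate_none_carTrans (by omega), hzs]

theorem isStochasticKernel_carK (hp : ∀ i, 0 ≤ p i) (hsum : ∑ i, p i = 1) :
    IsStochasticKernel (carK p) where
  nonneg m m' := sum_nonneg fun y _ => by
    split_ifs
    · cases y <;> exact hp _
    · exact le_rfl
  hasSum m := by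
    have := hasSum_sum (s := univ) fun y _ => hasSum_ite_eq (carTrans m y) (pOf p y)
    rw [sum_pOf hsum] at this
    convert this using 2 with m'
    simp only [carK, eq_comm]

theorem isStochasticKernel_carKpow (hp : ∀ i, 0 ≤ p i) (hsum : ∑ i, p i = 1) (t : ℕ) :
    IsStochasticKernel (carKpow p t) := by
  induction t with
  | zero => exact
    { nonneg := fun m m' => by simp only [carKpow]; split_ifs <;> norm_num
      hasSum := fun m => by simpa [carKpow, eq_comm] using hasSum_ite_eq m (1 : ℝ) }
  | succ t ih => exact ih.comp (isStochasticKernel_carK hp hsum)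

theorem carK_carTrans_pos (hp : ∀ i, 0 < p i) (m : Fin κ → ℕ) (y : Option (Fin κ)) :
    0 < carK p m (carTrans m y) := by
  have hpOf : ∀ y, 0 < pOf p y := fun y => by cases y <;> exact hp _
  refine (hpOf y).trans_le ?_
  have := single_le_sum (f := fun y' => if carTrans m y' = carTrans m y then pOf p y' else 0)
    (fun y' _ => by split_ifs; exacts [(hpOf y').le, le_rfl]) (mem_univ y)
  simpa [carK] using this

theorem carKpow_length_foldl_pos (hp : ∀ i, 0 < p i) (hsum : ∑ i, p i = 1)
    (ys : List (Option (Fin κ))) (m : Fin κ → ℕ) :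
    0 < carKpow p ys.length m (ys.foldl carTrans m) := by
  induction ys using List.reverseRecOn with
  | nil => simp [carKpow]
  | append_singleton ys y ih =>
    have hK := isStochasticKernel_carK (fun i => (hp i).le) hsum
    have hpow := isStochasticKernel_carKpow (fun i => (hp i).le) hsum ys.length
    rw [List.length_append, List.length_singleton, List.foldl_append, List.foldl_cons,
      List.foldl_nil]
    exact (mul_pos ih (carK_carTrans_pos hp _ y)).trans_le
      (hK.mul_le_tsum_mul (hpow.nonneg m) (hpow.hasSum m).summable _ _)

theorem reflTransGen_carK (hp : ∀ i, 0 < p i) (m m' : Fin κ → ℕ) :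
    ReflTransGen (fun a b => 0 < carK p a b) m m' := by
  obtain ⟨ys, -, rfl⟩ := exists_foldl_carTrans_eq m m' le_rfl
  induction ys generalizing m with
  | nil => exact .refl
  | cons y ys ih => exact .head (carK_carTrans_pos hp m y) (ih _)

theorem hasSum_carPi (hp : ∀ i, 0 < p i) (hsub : ∀ i : Fin κ, p i.succ < p 0) :
    HasSum (carPi p) 1 := by
  have hr0 (i : Fin κ) : 0 ≤ p i.succ / p 0 := (div_pos (hp _) (hp 0)).le
  have hr1 (i : Fin κ) : p i.succ / p 0 < 1 := (div_lt_one (hp 0)).2 (hsub i)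
  have hgeom (i : Fin κ) :
      HasSum (fun n : ℕ => (1 - p i.succ / p 0) * (p i.succ / p 0) ^ n) 1 := by
    simpa [(sub_pos.2 (hr1 i)).ne'] using
      (hasSum_geometric_of_lt_one (hr0 i) (hr1 i)).mul_left (1 - p i.succ / p 0)
  have := hasSum_prod_fin (fun i n => mul_nonneg (sub_nonneg.2 (hr1 i).le) (pow_nonneg (hr0 i) n))
    hgeom
  rwa [prod_const_one] at this

theorem carPi_nonneg (hp : ∀ i, 0 < p i) (hsub : ∀ i : Fin κ, p i.succ < p 0)
    (m : Fin κ → ℕ) : 0 ≤ carPi p m :=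
  prod_nonneg fun i _ => mul_nonneg (sub_nonneg.2 ((div_lt_one (hp 0)).2 (hsub i)).le)
    (pow_nonneg (div_pos (hp _) (hp 0)).le _)

end Carrier

/-- In the subcritical regime `p_0 > max(p_1,…,p_κ)`, the multiplicity
chain of the infinite-capacity carrier over the i.i.d. configuration `X^p` is irreducible
and aperiodic, and the product-geometric distribution `π` is its unique stationary
distribution. -/
theorem stmt14 (κ : ℕ) (p : Fin (κ + 1) → ℝ) (hp : ∀ i, 0 < p i) (hsum : ∑ i, p i = 1)
    (hsub : ∀ i : Fin κ, p i.succ < p 0) :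
    (∀ m m' : Fin κ → ℕ, ∃ N : ℕ, ∀ t ≥ N, 0 < carKpow p t m m') ∧
    (∀ m' : Fin κ → ℕ, ∑' m : Fin κ → ℕ, carPi p m * carK p m m' = carPi p m') ∧
    (∀ π' : (Fin κ → ℕ) → ℝ, (∀ m, 0 ≤ π' m) → (∑' m, π' m = 1) →
      (∀ m' : Fin κ → ℕ, ∑' m : Fin κ → ℕ, π' m * carK p m m' = π' m') →
      π' = carPi p) := by
  refine ⟨fun m m' => ⟨∑ i, m i + ∑ i, m' i, fun t ht => ?_⟩,
    carPi_stationary (hp 0).ne' hsum, fun π' hπ'0 hπ'1 hπ'stat => ?_⟩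
  · obtain ⟨ys, rfl, hys⟩ := exists_foldl_carTrans_eq m m' ht
    exact hys ▸ carKpow_length_foldl_pos hp hsum ys m
  · have hπ' : HasSum π' 1 := by
      by_cases h : Summable π'
      · exact hπ'1 ▸ h.hasSum
      · simp [tsum_eq_zero_of_not_summable h] at hπ'1
    exact (isStochasticKernel_carK (fun i => (hp i).le) hsum).eq_of_stationary
      (reflTransGen_carK hp) hπ'0 (carPi_nonneg hp hsub) hπ' (hasSum_carPi hp hsub) hπ'stat
      (carPi_stationary (hp 0).ne' hsum)
end

section
/- Consider the circular exclusion transition Ψ on B_∞ × {0,1,...,κ}: for each pair (x,y) with Ψ(x,y) = (y', x'), the multiset of positive colors in (x,y) equals the multiset of positive colors in (y',x'); consequently, for any positive weights (w_i)_{i=1}^κ, ∏_i w_i^{m_i(x)}·w_y = w_{y'}·∏_i w_i^{m_i(x')} (with w_0 := 1 interpreted suitably). Moreover, for each fixed x' ∈ B_∞, Ψ restricts to a bijection between the set of pairs (x,y) with Ψ_2(x,y) = x' and the set {0,1,...,κ} of possible output colors y'. -/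
/-- One step of the infinite-capacity carrier: the carrier is the multiset of the balls of
positive color it holds. An incoming ball `y ≥ 1` replaces the largest ball of color
strictly smaller than `y` if one exists (otherwise it fills an empty slot); an incoming `0`
ejects the ball of largest color (if any). -/
noncomputable def infStep (x : Multiset ℕ) (y : ℕ) : Multiset ℕ := by
  classical
  exact if y = 0 then x.erase x.sup
    else y ::ₘ x.erase ((x.filter fun a => a < y).sup)

/-- The color of the ball exiting the carrier (`0` for an empty box). -/
noncomputable def infOut (x : Multiset ℕ) (y : ℕ) : ℕ := by
  classical
  exact if y = 0 then x.sup else (x.filter fun a => a < y).sup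

lemma msup_mem_s15 : ∀ {x : Multiset ℕ}, x.sup ≠ 0 → x.sup ∈ x := by
  intro x
  induction x using Multiset.induction with
  | empty => simp
  | cons a s ih =>
    intro h
    rw [Multiset.sup_cons] at h ⊢
    rcases le_total a s.sup with hle | hle
    · rw [sup_eq_right.mpr hle] at h ⊢
      exact Multiset.mem_cons_of_mem (ih h)
    · rw [sup_eq_left.mpr hle]
      exact Multiset.mem_cons_self _ _

lemma msup_zero_eq {x : Multiset ℕ} (hx : (0:ℕ) ∉ x) (h : x.sup = 0) : x = 0 := by
  by_contra hne
  obtain ⟨a, ha⟩ := Multiset.exists_mem_of_ne_zero hne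
  have : a ≤ 0 := h ▸ Multiset.le_sup ha
  exact hx ((Nat.le_zero.mp this) ▸ ha)

/-- The multiset of colors in play is preserved. -/
lemma pair_eq (x : Multiset ℕ) (y : ℕ) (hx : (0:ℕ) ∉ x) :
    (if y = 0 then x else y ::ₘ x) =
      (if infOut x y = 0 then infStep x y else infOut x y ::ₘ infStep x y) := by
  unfold infStep infOut
  by_cases hy : y = 0
  · simp only [if_pos hy]
    by_cases hs : x.sup = 0
    · rw [if_pos hs, msup_zero_eq hx hs]
      simp
    · rw [if_neg hs, Multiset.cons_erase (msup_mem_s15 hs)]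
  · simp only [if_neg hy]
    by_cases hs : (x.filter fun a => a < y).sup = 0
    · rw [if_pos hs, hs, Multiset.erase_of_notMem hx]
    · rw [if_neg hs]
      have hsx : (x.filter fun a => a < y).sup ∈ x :=
        Multiset.mem_of_mem_filter (msup_mem_s15 hs)
      rw [Multiset.cons_swap, Multiset.cons_erase hsx]

/-- Where the input ball goes: given `0 ∉ x`, the pair `(x,y)` can be recovered from
`(infStep x y, infOut x y)`. -/
noncomputable def recover (x' : Multiset ℕ) (y' : ℕ) : Multiset ℕ × ℕ :=
  if (x'.filter fun a => y' < a) = 0 then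
    ((if y' = 0 then x' else y' ::ₘ x'), 0)
  else
    ((if y' = 0 then x'.erase (sInf {n | n ∈ x'.filter fun a => y' < a})
      else y' ::ₘ x'.erase (sInf {n | n ∈ x'.filter fun a => y' < a})),
     sInf {n | n ∈ x'.filter fun a => y' < a})

lemma recover_left (x : Multiset ℕ) (y : ℕ) (hx : (0:ℕ) ∉ x) :
    recover (infStep x y) (infOut x y) = (x, y) := by
  unfold infStep infOut recover
  by_cases hy : y = 0
  · simp only [if_pos hy]
    have hfil : ((x.erase x.sup).filter fun a => x.sup < a) = 0 := by
      rw [Multiset.filter_eq_nil]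
      intro a ha
      exact not_lt.mpr (Multiset.le_sup (Multiset.mem_of_mem_erase ha))
    rw [if_pos hfil]
    by_cases hs : x.sup = 0
    · rw [if_pos hs, msup_zero_eq hx hs]
      simp [hy]
    · rw [if_neg hs, Multiset.cons_erase (msup_mem_s15 hs), hy]
  · simp only [if_neg hy]
    set s := (x.filter fun a => a < y).sup with hsdef
    set x' := y ::ₘ x.erase s with hx'def
    have hsy : s < y := by
      by_cases hs : s = 0
      · exact hs ▸ Nat.pos_of_ne_zero hy
      · exact (Multiset.mem_filter.mp (msup_mem_s15 hs)).2
    have hymem : y ∈ x'.filter fun a => s < a :=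
      Multiset.mem_filter.mpr ⟨Multiset.mem_cons_self _ _, hsy⟩
    have hfil : (x'.filter fun a => s < a) ≠ 0 := fun h => by simp [h] at hymem
    rw [if_neg hfil]
    have hmin : sInf {n | n ∈ x'.filter fun a => s < a} = y := by
      apply le_antisymm (Nat.sInf_le hymem)
      have hz := Nat.sInf_mem (⟨y, hymem⟩ : Set.Nonempty {n | n ∈ x'.filter fun a => s < a})
      set z := sInf {n | n ∈ x'.filter fun a => s < a}
      obtain ⟨hzx', hsz⟩ := Multiset.mem_filter.mp hz
      rcases Multiset.mem_cons.mp hzx' with h | h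
      · exact h.ge
      · by_contra hlt
        have : z ≤ s := Multiset.le_sup
          (Multiset.mem_filter.mpr ⟨Multiset.mem_of_mem_erase h, not_le.mp hlt⟩)
        exact absurd hsz (not_lt.mpr this)
    rw [hmin]
    have herase : x'.erase y = x.erase s := Multiset.erase_cons_head _ _
    by_cases hs : s = 0
    · rw [if_pos hs, herase, hs, Multiset.erase_of_notMem hx]
    · rw [if_neg hs, herase,
        Multiset.cons_erase (Multiset.mem_of_mem_filter (msup_mem_s15 hs))]

lemma recover_right (κ : ℕ) (x' : Multiset ℕ) (hx' : (0:ℕ) ∉ x')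
    (hκ : ∀ a ∈ x', a ≤ κ) (y' : ℕ) (hy' : y' ≤ κ) :
    ((0:ℕ) ∉ (recover x' y').1 ∧ (∀ a ∈ (recover x' y').1, a ≤ κ) ∧ (recover x' y').2 ≤ κ) ∧
      infStep (recover x' y').1 (recover x' y').2 = x' ∧
      infOut (recover x' y').1 (recover x' y').2 = y' := by
  unfold recover
  by_cases hfil : (x'.filter fun a => y' < a) = 0
  · rw [if_pos hfil]
    have hbound : ∀ a ∈ x', a ≤ y' := fun a ha =>
      not_lt.mp ((Multiset.filter_eq_nil.mp hfil) a ha)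
    by_cases hy0 : y' = 0
    · have hx'0 : x' = 0 := by
        by_contra hne
        obtain ⟨a, ha⟩ := Multiset.exists_mem_of_ne_zero hne
        exact hx' ((Nat.le_zero.mp (hy0 ▸ hbound a ha)) ▸ ha)
      subst hy0
      simp only [if_pos rfl, hx'0]
      refine ⟨⟨by simp, by simp, Nat.zero_le _⟩, ?_, ?_⟩ <;> simp [infStep, infOut]
    · simp only [if_neg hy0]
      have hsup : (y' ::ₘ x').sup = y' := by
        rw [Multiset.sup_cons, sup_eq_left]
        exact Multiset.sup_le.mpr hbound
      refine ⟨⟨?_, ?_, Nat.zero_le _⟩, ?_, ?_⟩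
      · intro h
        rcases Multiset.mem_cons.mp h with h | h
        · exact hy0 h.symm
        · exact hx' h
      · intro a ha
        rcases Multiset.mem_cons.mp ha with h | h
        · exact h ▸ hy'
        · exact hκ a h
      · simp [infStep, hsup, Multiset.erase_cons_head]
      · simp [infOut, hsup]
  · rw [if_neg hfil]
    set yv := sInf {n | n ∈ x'.filter fun a => y' < a} with hyv
    have hymem : yv ∈ x'.filter fun a => y' < a :=
      Nat.sInf_mem ((Multiset.exists_mem_of_ne_zero hfil).imp (fun a h => h))
    obtain ⟨hyx', hy'y⟩ := Multiset.mem_filter.mp hymem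
    have hyne : yv ≠ 0 := by omega
    set b : Multiset ℕ := if y' = 0 then x'.erase yv else y' ::ₘ x'.erase yv with hb
    have hbsub : ∀ a ∈ b, a = y' ∨ a ∈ x'.erase yv := by
      intro a ha
      rw [hb] at ha
      split_ifs at ha with h
      · exact Or.inr ha
      · exact (Multiset.mem_cons.mp ha).imp id id
    have hfb : (b.filter fun a => a < yv).sup = y' := by
      have hle : (b.filter fun a => a < yv).sup ≤ y' := by
        apply Multiset.sup_le.mpr
        intro a ha
        obtain ⟨hab, halt⟩ := Multiset.mem_filter.mp ha
        rcases hbsub a hab with h | h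
        · exact h.le
        · by_contra hgt
          have : a ∈ x'.filter fun c => y' < c :=
            Multiset.mem_filter.mpr ⟨Multiset.mem_of_mem_erase h, not_le.mp hgt⟩
          exact absurd (Nat.sInf_le this) (not_le.mpr halt)
      by_cases hy0 : y' = 0
      · omega
      · refine le_antisymm hle (Multiset.le_sup ?_)
        apply Multiset.mem_filter.mpr
        refine ⟨?_, hy'y⟩
        rw [hb, if_neg hy0]
        exact Multiset.mem_cons_self _ _
    have heb : b.erase y' = x'.erase yv := by
      rw [hb]
      split_ifs with h
      · subst h
        exact Multiset.erase_of_notMem (fun hc => hx' (Multiset.mem_of_mem_erase hc))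
      · exact Multiset.erase_cons_head _ _
    refine ⟨⟨?_, ?_, hκ yv hyx'⟩, ?_, ?_⟩
    · intro h0
      rw [hb] at h0
      split_ifs at h0 with h
      · exact hx' (Multiset.mem_of_mem_erase h0)
      · rcases Multiset.mem_cons.mp h0 with h1 | h1
        · exact h h1.symm
        · exact hx' (Multiset.mem_of_mem_erase h1)
    · intro a ha
      rcases hbsub a ha with h | h
      · exact h ▸ hy'
      · exact hκ a (Multiset.mem_of_mem_erase h)
    · simp only [infStep, if_neg hyne, hfb, heb, Multiset.cons_erase hyx']
    · simp only [infOut, if_neg hyne, hfb]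

/-- For the circular exclusion transition `Ψ(x,y) = (y',x')` on
`B_∞ × {0,…,κ}`: the multiset of positive colors of the pair `(x,y)` equals that of
`(y',x')`; hence for any weights `w` with `w 0 = 1` one has
`(∏_{a∈x} w a)·w y = w y' · ∏_{a∈x'} w a`; and for each fixed `x'`, `Ψ` restricts to a
bijection (via the output color `y'`) between the pairs `(x,y)` with `Ψ₂(x,y) = x'` and the
color set `{0,…,κ}`. -/
theorem stmt15 (κ : ℕ) :
    (∀ (x : Multiset ℕ) (y : ℕ), (0:ℕ) ∉ x → (∀ a ∈ x, a ≤ κ) → y ≤ κ →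
      ((if y = 0 then x else y ::ₘ x) =
        (if infOut x y = 0 then infStep x y else infOut x y ::ₘ infStep x y)) ∧
      (∀ w : ℕ → ℝ, w 0 = 1 →
        (x.map w).prod * w y = w (infOut x y) * ((infStep x y).map w).prod)) ∧
    (∀ x' : Multiset ℕ, (0:ℕ) ∉ x' → (∀ a ∈ x', a ≤ κ) →
      ∀ y' : ℕ, y' ≤ κ →
        ∃! q : Multiset ℕ × ℕ,
          ((0:ℕ) ∉ q.1 ∧ (∀ a ∈ q.1, a ≤ κ) ∧ q.2 ≤ κ) ∧
          infStep q.1 q.2 = x' ∧ infOut q.1 q.2 = y') := by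
  constructor
  · intro x y hx _ _
    have hpe := pair_eq x y hx
    refine ⟨hpe, fun w hw => ?_⟩
    have hl : (x.map w).prod * w y = ((if y = 0 then x else y ::ₘ x).map w).prod := by
      by_cases hy : y = 0
      · rw [if_pos hy, hy, hw, mul_one]
      · rw [if_neg hy, Multiset.map_cons, Multiset.prod_cons, mul_comm]
    have hr : w (infOut x y) * ((infStep x y).map w).prod =
        ((if infOut x y = 0 then infStep x y else infOut x y ::ₘ infStep x y).map w).prod := by
      by_cases ho : infOut x y = 0
      · rw [if_pos ho, ho, hw, one_mul]
      · rw [if_neg ho, Multiset.map_cons, Multiset.prod_cons]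
    rw [hl, hr, hpe]
  · intro x' hx' hκ y' hy'
    refine ⟨recover x' y', recover_right κ x' hx' hκ y' hy', fun q hq => ?_⟩
    have := recover_left q.1 q.2 hq.1.1
    rw [hq.2.1, hq.2.2] at this
    exact this.symm
end
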